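/- arXiv:2108.03943 — 6 statements merged into one kernel-verified Lean document; each statement's English description precedes it below -/
import Mathlib

section
/- If n is an even positive integer that is not a power of 2, then there exists a transitive permutation group G of degree n whose derangement graph Γ_G is a complete multipartite graph with n/2 parts. -/
/-! ### Basic definitions: derangement graphs, intersecting sets, EKR properties -/

/-- The derangement graph of a permutation group `G ≤ Sym(V)`: vertices are the elements
of `G`, and distinct `g`, `h` are adjacent iff `g * h⁻¹` is fixed-point-free on `V`. -/
def derGraph {V : Type*} (G : Subgroup (Equiv.Perm V)) : SimpleGraph G where
  Adj g h := g ≠ h ∧ ∀ v : V, ((g : Equiv.Perm V) * (h : Equiv.Perm V)⁻¹) v ≠ v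
  symm := ⟨by
    rintro g h ⟨hne, hd⟩
    refine ⟨hne.symm, fun v hv => hd v ?_⟩
    have h2 := congrArg (⇑(((h : Equiv.Perm V) * (g : Equiv.Perm V)⁻¹)⁻¹)) hv
    simpa [mul_inv_rev] using h2.symm⟩
  loopless := ⟨fun g hg => hg.1 rfl⟩

/-- A subset `I` of a permutation group `G ≤ Sym(V)` is intersecting if any two of its
elements agree on some point of `V`. -/
def IsIntersecting {V : Type*} (G : Subgroup (Equiv.Perm V)) (I : Set G) : Prop :=
  ∀ g ∈ I, ∀ h ∈ I, ∃ v : V, (g : Equiv.Perm V) v = (h : Equiv.Perm V) v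

/-- A permutation group `G ≤ Sym(V)` is transitive if it acts transitively on `V`. -/
def IsTransitive {V : Type*} (G : Subgroup (Equiv.Perm V)) : Prop :=
  ∀ v w : V, ∃ g ∈ G, g v = w

/-- A permutation group is regular if it is transitive and all point stabilizers are trivial. -/
def IsRegularGroup {V : Type*} (G : Subgroup (Equiv.Perm V)) : Prop :=
  IsTransitive G ∧ ∀ g ∈ G, ∀ v : V, g v = v → g = 1

/-- The stabilizer of a point `v`, as a subset of the permutation group `G`. -/
def stabSet {V : Type*} (G : Subgroup (Equiv.Perm V)) (v : V) : Set G :=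
  {g : G | (g : Equiv.Perm V) v = v}

/-- The intersection density `ρ(G)` of a (transitive) permutation group `G`: the maximum of
`|I| / |G_v|` over all intersecting sets `I` of `G`, where `G_v` is a point stabilizer. -/
noncomputable def interDensity {V : Type*} (G : Subgroup (Equiv.Perm V)) : ℝ :=
  sSup {x : ℝ | ∃ (I : Set G) (v : V), IsIntersecting G I ∧
    x = (Nat.card I : ℝ) / (Nat.card (stabSet G v) : ℝ)}

/-- A permutation group has the EKR-property if every intersecting set has size at most
the size of the largest point stabilizer. -/
def HasEKR {V : Type*} (G : Subgroup (Equiv.Perm V)) : Prop :=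
  ∀ I : Set G, IsIntersecting G I → Nat.card I ≤ ⨆ v : V, Nat.card (stabSet G v)

/-- A permutation group has the strict-EKR-property if every intersecting set of maximum
size is a coset of a point stabilizer. -/
def HasStrictEKR {V : Type*} (G : Subgroup (Equiv.Perm V)) : Prop :=
  ∀ I : Set G, IsIntersecting G I →
    (∀ J : Set G, IsIntersecting G J → Nat.card J ≤ Nat.card I) →
    ∃ (v : V) (a : G), I = (fun g => a * g) '' stabSet G v

/-! ### Graph products and related graph-theoretic notions -/

/-- The strong product of two simple graphs. -/
def strongProd {α β : Type*} (X : SimpleGraph α) (Y : SimpleGraph β) :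
    SimpleGraph (α × β) where
  Adj p q := (p.1 = q.1 ∧ Y.Adj p.2 q.2) ∨ (p.2 = q.2 ∧ X.Adj p.1 q.1) ∨
    (X.Adj p.1 q.1 ∧ Y.Adj p.2 q.2)
  symm := ⟨by
    rintro p q (⟨h1, h2⟩ | ⟨h1, h2⟩ | ⟨h1, h2⟩)
    · exact Or.inl ⟨h1.symm, h2.symm⟩
    · exact Or.inr (Or.inl ⟨h1.symm, h2.symm⟩)
    · exact Or.inr (Or.inr ⟨h1.symm, h2.symm⟩)⟩
  loopless := ⟨by
    rintro p (⟨_, h⟩ | ⟨_, h⟩ | ⟨h, _⟩)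
    · exact Y.loopless.irrefl _ h
    · exact X.loopless.irrefl _ h
    · exact X.loopless.irrefl _ h⟩

/-- The tensor (direct, categorical) product of two simple graphs. -/
def tensorProd {α β : Type*} (X : SimpleGraph α) (Y : SimpleGraph β) :
    SimpleGraph (α × β) where
  Adj p q := X.Adj p.1 q.1 ∧ Y.Adj p.2 q.2
  symm := ⟨fun _ _ ⟨h1, h2⟩ => ⟨h1.symm, h2.symm⟩⟩
  loopless := ⟨fun _ ⟨h1, _⟩ => X.loopless.irrefl _ h1⟩

/-- The tensor (direct) product of a family of simple graphs: two tuples are adjacent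
iff they are adjacent in every coordinate (for a nonempty index type this coincides with
the definition below, where distinctness is required to keep the graph loopless). -/
def tensorPi {ι : Type*} {α : ι → Type*} (X : ∀ i, SimpleGraph (α i)) :
    SimpleGraph (∀ i, α i) where
  Adj f g := f ≠ g ∧ ∀ i, (X i).Adj (f i) (g i)
  symm := ⟨fun _ _ ⟨hne, h⟩ => ⟨hne.symm, fun i => (h i).symm⟩⟩
  loopless := ⟨fun _ h => h.1 rfl⟩

/-- The disjoint union of `ι`-indexed copies of a simple graph `X`. -/
def copiesGraph (ι : Type*) {α : Type*} (X : SimpleGraph α) : SimpleGraph (ι × α) where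
  Adj p q := p.1 = q.1 ∧ X.Adj p.2 q.2
  symm := ⟨fun _ _ ⟨h1, h2⟩ => ⟨h1.symm, h2.symm⟩⟩
  loopless := ⟨fun _ h => X.loopless.irrefl _ h.2⟩

/-- The lexicographic product (wreath product) `X[Y]` of simple graphs. -/
def lexProd {α β : Type*} (X : SimpleGraph α) (Y : SimpleGraph β) :
    SimpleGraph (α × β) where
  Adj p q := X.Adj p.1 q.1 ∨ (p.1 = q.1 ∧ Y.Adj p.2 q.2)
  symm := ⟨by
    rintro p q (h | ⟨h1, h2⟩)
    · exact Or.inl h.symm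
    · exact Or.inr ⟨h1.symm, h2.symm⟩⟩
  loopless := ⟨by
    rintro p (h | ⟨_, h⟩)
    · exact X.loopless.irrefl _ h
    · exact Y.loopless.irrefl _ h⟩

/-- A simple graph is complete multipartite with `k` parts if its vertex set can be
partitioned into `k` (nonempty) parts so that two vertices are adjacent iff they lie in
different parts. -/
def IsCompleteMultipartiteWith {α : Type*} (X : SimpleGraph α) (k : ℕ) : Prop :=
  ∃ f : α → Fin k, Function.Surjective f ∧ ∀ a b : α, X.Adj a b ↔ f a ≠ f b

/-- An independent set (coclique) of a simple graph. -/
def IsIndep {α : Type*} (X : SimpleGraph α) (A : Set α) : Prop :=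
  ∀ a ∈ A, ∀ b ∈ A, ¬ X.Adj a b

/-- The independence number `α(X)` of a simple graph. -/
noncomputable def indepNum {α : Type*} (X : SimpleGraph α) : ℕ :=
  sSup {k : ℕ | ∃ A : Set α, IsIndep X A ∧ Nat.card A = k}

/-- The closed neighbourhood `N[A]` of a set `A` of vertices. -/
def closedNbhd {α : Type*} (X : SimpleGraph α) (A : Set α) : Set α :=
  {b | ∃ a ∈ A, a = b ∨ X.Adj a b}

/-- A graph `X` is IS-primitive if there is no non-maximum independent set `A` with
`|A| / |N[A]| = α(X) / |V(X)|`. -/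
def IsISPrimitive {α : Type*} (X : SimpleGraph α) : Prop :=
  ¬ ∃ A : Set α, IsIndep X A ∧ Nat.card A < indepNum X ∧
    (Nat.card A : ℚ) / (Nat.card (closedNbhd X A) : ℚ) =
      (indepNum X : ℚ) / (Nat.card α : ℚ)

/-- A simple graph is vertex-transitive if its automorphism group acts transitively on the
vertices. -/
def IsVertexTransitive {α : Type*} (X : SimpleGraph α) : Prop :=
  ∀ a b : α, ∃ e : X ≃g X, e a = b

/-! ### External and internal direct products of permutation groups -/

/-- The canonical monoid homomorphism `Sym(V) × Sym(W) → Sym(V × W)`. -/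
def permProdCongrHom (V W : Type*) : Equiv.Perm V × Equiv.Perm W →* Equiv.Perm (V × W) where
  toFun p := Equiv.prodCongr p.1 p.2
  map_one' := Equiv.ext fun _ => rfl
  map_mul' := fun _ _ => Equiv.ext fun _ => rfl

/-- The external direct product of permutation groups `G ≤ Sym(V)` and `H ≤ Sym(W)`,
acting on `V × W` by `(g,h)⬝(v,w) = (g v, h w)`. -/
def extProd {V W : Type*} (G : Subgroup (Equiv.Perm V)) (H : Subgroup (Equiv.Perm W)) :
    Subgroup (Equiv.Perm (V × W)) :=
  Subgroup.map (permProdCongrHom V W) (G.prod H)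

/-- The internal direct product of a family of permutation groups `G i ≤ Sym(V i)`,
acting componentwise on the disjoint union `Σ i, V i`. -/
def intProd {ι : Type*} {V : ι → Type*} (G : ∀ i, Subgroup (Equiv.Perm (V i))) :
    Subgroup (Equiv.Perm (Σ i, V i)) :=
  Subgroup.map (Equiv.Perm.sigmaCongrRightHom V) (Subgroup.pi Set.univ G)

/-! ### Wreath products of permutation groups -/

/-- The permutation of `V × {1,…,n}` associated to an element `((g₁,…,gₙ), h)` of the
wreath product: `(a, i) ↦ (gᵢ a, h i)`. -/
def wreathPerm {V : Type*} {n : ℕ} (g : Fin n → Equiv.Perm V) (h : Equiv.Perm (Fin n)) :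
    Equiv.Perm (V × Fin n) where
  toFun p := (g p.2 p.1, h p.2)
  invFun p := ((g (h⁻¹ p.2))⁻¹ p.1, h⁻¹ p.2)
  left_inv := by rintro ⟨a, i⟩; simp
  right_inv := by rintro ⟨b, j⟩; simp

/-- The wreath product `G ≀ H` of `G ≤ Sym(V)` by `H ≤ Sₙ`, as a permutation group
acting on `V × {1,…,n}`. -/
def wreathProd {V : Type*} {n : ℕ} (G : Subgroup (Equiv.Perm V))
    (H : Subgroup (Equiv.Perm (Fin n))) : Subgroup (Equiv.Perm (V × Fin n)) where
  carrier := {σ | ∃ (g : Fin n → Equiv.Perm V) (h : Equiv.Perm (Fin n)),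
    (∀ i, g i ∈ G) ∧ h ∈ H ∧ σ = wreathPerm g h}
  one_mem' := ⟨fun _ => 1, 1, fun _ => G.one_mem, H.one_mem, Equiv.ext fun _ => rfl⟩
  mul_mem' := by
    rintro σ τ ⟨g, h, hg, hh, rfl⟩ ⟨g', h', hg', hh', rfl⟩
    exact ⟨fun i => g (h' i) * g' i, h * h',
      fun i => G.mul_mem (hg _) (hg' _), H.mul_mem hh hh', Equiv.ext fun _ => rfl⟩
  inv_mem' := by
    rintro σ ⟨g, h, hg, hh, rfl⟩
    exact ⟨fun i => (g (h⁻¹ i))⁻¹, h⁻¹,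
      fun i => G.inv_mem (hg _), H.inv_mem hh, Equiv.ext fun _ => rfl⟩

theorem mem_wreathProd {V : Type*} {n : ℕ} {G : Subgroup (Equiv.Perm V)}
    {H : Subgroup (Equiv.Perm (Fin n))} {σ : Equiv.Perm (V × Fin n)} :
    σ ∈ wreathProd G H ↔ ∃ (g : Fin n → Equiv.Perm V) (h : Equiv.Perm (Fin n)),
      (∀ i, g i ∈ G) ∧ h ∈ H ∧ σ = wreathPerm g h := Iff.rfl

/-! Write `n = 2m` and let `p > 1` be the odd part of `m`. The group acts on `ZMod 2 × ZMod m`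
by `(ε, a) ↦ (ε + v (a mod p), a + j)`, where `v : ZMod p → ZMod 2` has even weight; it is
transitive because `p > 1` leaves room for `v` to carry weight at two residues. An
element with `j = 0` fixes a point, because an even-weight vector of odd length has a zero
entry; with `j ≠ 0` it moves every point. So the derangements are exactly the elements outside
the kernel of the homomorphism `g ↦ j` onto `ZMod m`, and its fibres are the `m` parts of the
derangement graph. -/

open Equiv Function

theorem IsTransitive.map_permCongrHom {V W : Type*} {G : Subgroup (Perm V)}
    (hG : IsTransitive G) (e : V ≃ W) :
    IsTransitive (G.map (e.permCongrHom : Perm V →* Perm W)) := by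
  intro v w
  obtain ⟨g, hg, hgv⟩ := hG (e.symm v) (e.symm w)
  exact ⟨e.permCongr g, Subgroup.mem_map_of_mem _ hg, by simp [hgv]⟩

def derGraphIsoMapPermCongrHom {V W : Type*} (G : Subgroup (Perm V)) (e : V ≃ W) :
    derGraph G ≃g derGraph (G.map (e.permCongrHom : Perm V →* Perm W)) where
  toEquiv := (e.permCongrHom.subgroupMap G).toEquiv
  map_rel_iff' {g h} := by
    have hmul : e.permCongr g * (e.permCongr h)⁻¹ = e.permCongr (g * (h : Perm V)⁻¹) := by
      simp only [← permCongrHom_coe, map_mul, map_inv]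
    simp only [derGraph, MulEquiv.toEquiv_eq_coe, EquivLike.coe_coe, ne_eq,
      EmbeddingLike.apply_eq_iff_eq, MulEquiv.coe_subgroupMap_apply, permCongrHom_coe, hmul,
      permCongr_apply, e.symm.forall_congr_left, symm_symm, symm_apply_apply]

theorem IsCompleteMultipartiteWith.of_iso {α β : Type*} {X : SimpleGraph α} {Y : SimpleGraph β}
    {k : ℕ} (hX : IsCompleteMultipartiteWith X k) (φ : X ≃g Y) :
    IsCompleteMultipartiteWith Y k := by
  obtain ⟨f, hf, hadj⟩ := hX
  exact ⟨f ∘ φ.symm, hf.comp φ.symm.surjective, fun a b => by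
    rw [← φ.symm.map_adj_iff]; exact hadj _ _⟩

theorem isCompleteMultipartiteWith_derGraph_of_monoidHom {V Q : Type*} [Group Q] [Finite Q]
    {G : Subgroup (Perm V)} (φ : G →* Q) (hφ : Surjective φ)
    (hder : ∀ g : G, (∀ v, (g : Perm V) v ≠ v) ↔ φ g ≠ 1) :
    IsCompleteMultipartiteWith (derGraph G) (Nat.card Q) := by
  refine ⟨Finite.equivFin Q ∘ φ, (Finite.equivFin Q).surjective.comp hφ, fun g h => ?_⟩
  have hgh : (∀ v, ((g : Perm V) * (h : Perm V)⁻¹) v ≠ v) ↔ φ g ≠ φ h := by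
    simpa [mul_inv_eq_one] using hder (g * h⁻¹)
  simp only [derGraph, comp_apply, ne_eq, EmbeddingLike.apply_eq_iff_eq]
  exact ⟨fun hadj => hgh.mp hadj.2,
    fun hne => ⟨fun hgh' => hne (congrArg φ hgh'), hgh.mpr hne⟩⟩

theorem ZMod.exists_eq_zero_of_sum_eq_zero_of_odd_card {ι : Type*} [Fintype ι]
    (hι : Odd (Fintype.card ι)) {v : ι → ZMod 2} (hv : ∑ i, v i = 0) : ∃ i, v i = 0 := by
  by_contra! h
  have hone : ∀ i, v i = 1 := fun i => Fin.eq_one_of_ne_zero (v i) (h i)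
  simp only [hone, Finset.sum_const, Finset.card_univ, nsmul_eq_mul, mul_one,
    ZMod.natCast_eq_zero_iff_even] at hv
  exact Nat.not_even_iff_odd.mpr hι hv

section FlipShift

variable {A B : Type*} [AddCommGroup A] [AddCommGroup B] (π : A →+ B)

def flipShift (v : B → ZMod 2) (j : A) : Perm (ZMod 2 × A) where
  toFun x := (x.1 + v (π x.2), x.2 + j)
  invFun x := (x.1 + v (π (x.2 - j)), x.2 - j)
  left_inv x := by simp [add_assoc, CharTwo.add_self_eq_zero]
  right_inv x := by simp [add_assoc, CharTwo.add_self_eq_zero]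

@[simp]
theorem flipShift_apply (v : B → ZMod 2) (j : A) (x : ZMod 2 × A) :
    flipShift π v j x = (x.1 + v (π x.2), x.2 + j) := rfl

theorem flipShift_mul (v v' : B → ZMod 2) (j j' : A) :
    flipShift π v j * flipShift π v' j' =
      flipShift π (fun b => v' b + v (b + π j')) (j' + j) := by
  ext x <;> simp [add_assoc]

theorem flipShift_inv (v : B → ZMod 2) (j : A) :
    (flipShift π v j)⁻¹ = flipShift π (fun b => v (b - π j)) (-j) := by
  ext x <;> simp [Perm.inv_def, flipShift, sub_eq_add_neg]

variable [Fintype B]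

def evenFlipShifts : Subgroup (Perm (ZMod 2 × A)) where
  carrier := {σ | ∃ v j, ∑ b, v b = 0 ∧ flipShift π v j = σ}
  one_mem' := ⟨0, 0, by simp, by ext <;> simp⟩
  mul_mem' := by
    rintro _ _ ⟨v, j, hv, rfl⟩ ⟨v', j', hv', rfl⟩
    have hshift : ∑ b, v (b + π j') = ∑ b, v b :=
      Fintype.sum_equiv (Equiv.addRight (π j')) _ _ fun _ => rfl
    refine ⟨_, _, ?_, (flipShift_mul π v v' j j').symm⟩
    rw [Finset.sum_add_distrib, hv', hshift, hv, add_zero]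
  inv_mem' := by
    rintro _ ⟨v, j, hv, rfl⟩
    have hshift : ∑ b, v (b - π j) = ∑ b, v b :=
      Fintype.sum_equiv (Equiv.subRight (π j)) _ _ fun _ => rfl
    exact ⟨_, _, hshift.trans hv, (flipShift_inv π v j).symm⟩

theorem isTransitive_evenFlipShifts [Nontrivial B] : IsTransitive (evenFlipShifts π) := by
  classical
  rintro ⟨ε, a⟩ ⟨ε', a'⟩
  obtain ⟨b, hb⟩ := exists_ne (π a)
  refine ⟨flipShift π (Pi.single (π a) (ε' - ε) + Pi.single b (ε' - ε)) (a' - a),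
    ⟨_, _, ?_, rfl⟩, ?_⟩
  · simp [Finset.sum_add_distrib, CharTwo.add_self_eq_zero]
  · simp [hb.symm]

theorem forall_flipShift_apply_ne_self_iff (hπ : Surjective π) (hB : Odd (Fintype.card B))
    {v : B → ZMod 2} (hv : ∑ b, v b = 0) (j : A) :
    (∀ x, flipShift π v j x ≠ x) ↔ j ≠ 0 := by
  constructor
  · rintro hder rfl
    obtain ⟨b, hb⟩ := ZMod.exists_eq_zero_of_sum_eq_zero_of_odd_card hB hv
    obtain ⟨a, rfl⟩ := hπ b
    exact hder (0, a) (by simp [hb])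
  · intro hj x hx
    exact hj (by simpa using congrArg Prod.snd hx)

def evenFlipShifts.shiftHom : evenFlipShifts π →* Multiplicative A where
  toFun g := Multiplicative.ofAdd ((g : Perm (ZMod 2 × A)) (0, 0)).2
  map_one' := by simp
  map_mul' := by
    rintro ⟨_, v, j, hv, rfl⟩ ⟨_, v', j', hv', rfl⟩
    simp [← ofAdd_add, add_comm]

@[simp]
theorem evenFlipShifts.shiftHom_apply (g : evenFlipShifts π) :
    evenFlipShifts.shiftHom π g = Multiplicative.ofAdd ((g : Perm (ZMod 2 × A)) (0, 0)).2 :=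
  rfl

theorem isCompleteMultipartiteWith_derGraph_evenFlipShifts [Finite A] (hπ : Surjective π)
    (hB : Odd (Fintype.card B)) :
    IsCompleteMultipartiteWith (derGraph (evenFlipShifts π)) (Nat.card A) := by
  have hφ : Surjective (evenFlipShifts.shiftHom π) := fun j =>
    ⟨⟨flipShift π 0 j.toAdd, 0, j.toAdd, by simp, rfl⟩, by simp⟩
  rw [← Nat.card_congr Multiplicative.toAdd]
  exact isCompleteMultipartiteWith_derGraph_of_monoidHom _ hφ fun ⟨_, v, j, hv, rfl⟩ => by
    simpa using forall_flipShift_apply_ne_self_iff π hπ hB hv j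

end FlipShift

/-- If `n` is even but not a power of `2`, then there is a transitive
permutation group `G` of degree `n` whose derangement graph is complete multipartite with
`n / 2` parts. -/
theorem exists_transitive_completeMultipartite (n : ℕ) (hpos : 0 < n) (heven : Even n)
    (hnotpow : ∀ k : ℕ, n ≠ 2 ^ k) :
    ∃ G : Subgroup (Equiv.Perm (Fin n)), IsTransitive G ∧
      IsCompleteMultipartiteWith (derGraph G) (n / 2) := by
  obtain ⟨m, rfl⟩ := heven.two_dvd
  obtain ⟨k, p, hp, hm⟩ := Nat.exists_eq_two_pow_mul_odd (n := m) (by omega)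
  have hp1 : 1 < p := by
    refine lt_of_le_of_ne hp.pos fun h1 => hnotpow (k + 1) ?_
    rw [hm, ← h1, pow_succ]
    ring
  have : NeZero m := ⟨by omega⟩
  have : Fact (1 < p) := ⟨hp1⟩
  have hpm : p ∣ m := Dvd.intro_left _ hm.symm
  let π := (ZMod.castHom hpm (ZMod p)).toAddMonoidHom
  let e : ZMod 2 × ZMod m ≃ Fin (2 * m) := Finite.equivFinOfCardEq (by simp)
  refine ⟨(evenFlipShifts π).map (e.permCongrHom : _ →* _),
    (isTransitive_evenFlipShifts π).map_permCongrHom e, ?_⟩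
  have hparts := (isCompleteMultipartiteWith_derGraph_evenFlipShifts π
    (ZMod.castHom_surjective hpm) (by simpa using hp)).of_iso (derGraphIsoMapPermCongrHom _ e)
  convert hparts using 1
  simp
end

section
/- Let V and W be finite sets, let G ≤ Sym(V) and H ≤ Sym(W) be transitive permutation groups, and let G × H act on V × W by (g,h)·(v,w) = (g(v), h(w)). Then G × H has the strict-EKR-property if and only if both G and H have the strict-EKR-property. -/
/-! Identify `extProd G H` with `G × H`. Both projections of an intersecting set `J ⊆ G × H`
are intersecting and `|J| ≤ |π₁ J| |π₂ J|`, so the maximum intersecting sets of `G × H` are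
exactly the products `I ×ˢ K` of maximum intersecting sets of `G` and of `H`. Since the
stabilizer of `(v, w)` is `G_v ×ˢ H_w`, such a product is a coset of a point stabilizer iff
both factors are. -/

theorem Set.card_le_card_image_fst_mul_card_image_snd {α β : Type*} [Finite α] [Finite β]
    (s : Set (α × β)) : Nat.card s ≤ Nat.card (Prod.fst '' s) * Nat.card (Prod.snd '' s) := by
  simp only [Nat.card_coe_set_eq, ← Set.ncard_prod]
  exact Set.ncard_le_ncard Set.subset_fst_image_prod_snd_image

section Intersecting

variable {V : Type*} (G : Subgroup (Equiv.Perm V))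

def IsMaxIntersecting (I : Set G) : Prop :=
  IsIntersecting G I ∧ ∀ J : Set G, IsIntersecting G J → Nat.card J ≤ Nat.card I

def IsStabCoset (I : Set G) : Prop :=
  ∃ (v : V) (a : G), I = (fun g => a * g) '' stabSet G v

theorem isIntersecting_stabSet (v : V) : IsIntersecting G (stabSet G v) :=
  fun _ hg _ hh => ⟨v, hg.trans hh.symm⟩

variable [Finite V]

theorem exists_isMaxIntersecting : ∃ I : Set G, IsMaxIntersecting G I := by
  have : Nonempty {I : Set G // IsIntersecting G I} :=
    ⟨⟨∅, fun _ hg => absurd hg (Set.notMem_empty _)⟩⟩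
  obtain ⟨⟨I, hI⟩, hmax⟩ := Finite.exists_max fun I : {I : Set G // IsIntersecting G I} =>
    Nat.card I.1
  exact ⟨I, hI, fun J hJ => hmax ⟨J, hJ⟩⟩

variable {G}

theorem IsMaxIntersecting.nonempty [Nonempty V] {I : Set G} (hI : IsMaxIntersecting G I) :
    I.Nonempty := by
  obtain ⟨v⟩ := ‹Nonempty V›
  have hstab : 0 < Nat.card (stabSet G v) :=
    Nat.card_pos_iff.2 ⟨⟨1, rfl⟩, inferInstance⟩
  have hpos := hstab.trans_le (hI.2 _ (isIntersecting_stabSet G v))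
  exact Set.nonempty_coe_sort.1 (Nat.card_pos_iff.1 hpos).1

theorem HasStrictEKR.nonempty (h : HasStrictEKR G) : Nonempty V := by
  obtain ⟨I, hI⟩ := exists_isMaxIntersecting G
  obtain ⟨v, -⟩ := h I hI.1 hI.2
  exact ⟨v⟩

end Intersecting

section ExtProd

variable {V W : Type*} [Nonempty V] [Nonempty W]

theorem permProdCongrHom_injective : Function.Injective (permProdCongrHom V W) := by
  rintro ⟨g, h⟩ ⟨g', h'⟩ heq
  obtain ⟨v₀⟩ := ‹Nonempty V›
  obtain ⟨w₀⟩ := ‹Nonempty W›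
  have happ (p : V × W) : g p.1 = g' p.1 ∧ h p.2 = h' p.2 :=
    Prod.ext_iff.1 (Equiv.ext_iff.1 heq p)
  exact Prod.ext (Equiv.ext fun v => (happ (v, w₀)).1) (Equiv.ext fun w => (happ (v₀, w)).2)

variable (G : Subgroup (Equiv.Perm V)) (H : Subgroup (Equiv.Perm W))

noncomputable def extProdEquiv : G × H ≃* extProd G H :=
  (G.prodEquiv H).symm.trans ((G.prod H).equivMapOfInjective _ permProdCongrHom_injective)

@[simp]
theorem extProdEquiv_apply (p : G × H) (x : V × W) :
    (extProdEquiv G H p : Equiv.Perm (V × W)) x =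
      ((p.1 : Equiv.Perm V) x.1, (p.2 : Equiv.Perm W) x.2) :=
  rfl

variable {G H}

theorem isIntersecting_image_prod {I : Set G} {K : Set H} (hI : IsIntersecting G I)
    (hK : IsIntersecting H K) : IsIntersecting (extProd G H) (extProdEquiv G H '' I ×ˢ K) := by
  rintro - ⟨p, ⟨hp₁, hp₂⟩, rfl⟩ - ⟨q, ⟨hq₁, hq₂⟩, rfl⟩
  obtain ⟨v, hv⟩ := hI _ hp₁ _ hq₁
  obtain ⟨w, hw⟩ := hK _ hp₂ _ hq₂
  exact ⟨(v, w), by simp [hv, hw]⟩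

theorem IsIntersecting.image_fst {J : Set (G × H)}
    (hJ : IsIntersecting (extProd G H) (extProdEquiv G H '' J)) :
    IsIntersecting G (Prod.fst '' J) := by
  rintro - ⟨p, hp, rfl⟩ - ⟨q, hq, rfl⟩
  obtain ⟨x, hx⟩ := hJ _ ⟨p, hp, rfl⟩ _ ⟨q, hq, rfl⟩
  exact ⟨x.1, congrArg Prod.fst hx⟩

theorem IsIntersecting.image_snd {J : Set (G × H)}
    (hJ : IsIntersecting (extProd G H) (extProdEquiv G H '' J)) :
    IsIntersecting H (Prod.snd '' J) := by
  rintro - ⟨p, hp, rfl⟩ - ⟨q, hq, rfl⟩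
  obtain ⟨x, hx⟩ := hJ _ ⟨p, hp, rfl⟩ _ ⟨q, hq, rfl⟩
  exact ⟨x.2, congrArg Prod.snd hx⟩

theorem image_stabSet_prod (v : V) (w : W) :
    extProdEquiv G H '' stabSet G v ×ˢ stabSet H w = stabSet (extProd G H) (v, w) := by
  ext σ
  obtain ⟨p, rfl⟩ := (extProdEquiv G H).surjective σ
  simp [(extProdEquiv G H).injective.mem_set_image, stabSet]

theorem image_coset_prod (a : G) (b : H) (v : V) (w : W) :
    extProdEquiv G H '' ((fun g => a * g) '' stabSet G v) ×ˢ ((fun h => b * h) '' stabSet H w) =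
      (fun σ => extProdEquiv G H (a, b) * σ) '' stabSet (extProd G H) (v, w) := by
  rw [← image_stabSet_prod, Set.prod_image_image_eq, Set.image_image, Set.image_image]
  exact Set.image_congr fun p _ => map_mul (extProdEquiv G H) (a, b) p

theorem isStabCoset_image_prod_iff {I : Set G} {K : Set H} (hI : I.Nonempty)
    (hK : K.Nonempty) :
    IsStabCoset (extProd G H) (extProdEquiv G H '' I ×ˢ K) ↔
      IsStabCoset G I ∧ IsStabCoset H K := by
  constructor
  · rintro ⟨⟨v, w⟩, c, hc⟩
    obtain ⟨⟨a, b⟩, rfl⟩ := (extProdEquiv G H).surjective c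
    rw [← image_coset_prod, (extProdEquiv G H).injective.image_injective.eq_iff,
      Set.prod_eq_prod_iff_of_nonempty (hI.prod hK)] at hc
    exact ⟨⟨v, a, hc.1⟩, ⟨w, b, hc.2⟩⟩
  · rintro ⟨⟨v, a, rfl⟩, ⟨w, b, rfl⟩⟩
    exact ⟨(v, w), extProdEquiv G H (a, b), image_coset_prod a b v w⟩

variable [Finite V] [Finite W]

theorem IsMaxIntersecting.image_prod {I : Set G} {K : Set H} (hI : IsMaxIntersecting G I)
    (hK : IsMaxIntersecting H K) :
    IsMaxIntersecting (extProd G H) (extProdEquiv G H '' I ×ˢ K) := by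
  refine ⟨isIntersecting_image_prod hI.1 hK.1, fun S hS => ?_⟩
  obtain ⟨J, rfl⟩ := Set.image_surjective.2 (extProdEquiv G H).surjective S
  simp only [Nat.card_image_of_injective (extProdEquiv G H).injective]
  calc Nat.card J ≤ Nat.card (Prod.fst '' J) * Nat.card (Prod.snd '' J) :=
        Set.card_le_card_image_fst_mul_card_image_snd J
    _ ≤ Nat.card I * Nat.card K := Nat.mul_le_mul (hI.2 _ hS.image_fst) (hK.2 _ hS.image_snd)
    _ = Nat.card (I ×ˢ K) := by simp only [Nat.card_coe_set_eq, Set.ncard_prod]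

theorem IsMaxIntersecting.eq_image_prod {J : Set (G × H)}
    (hJ : IsMaxIntersecting (extProd G H) (extProdEquiv G H '' J)) :
    IsMaxIntersecting G (Prod.fst '' J) ∧ IsMaxIntersecting H (Prod.snd '' J) ∧
      J = (Prod.fst '' J) ×ˢ (Prod.snd '' J) := by
  obtain ⟨I, hI⟩ := exists_isMaxIntersecting G
  obtain ⟨K, hK⟩ := exists_isMaxIntersecting H
  have hJ₁ := hJ.1.image_fst
  have hJ₂ := hJ.1.image_snd
  have hIK : Nat.card I * Nat.card K ≤ Nat.card J := by
    have := hJ.2 _ (hI.image_prod hK).1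
    simpa only [Nat.card_image_of_injective (extProdEquiv G H).injective, Nat.card_coe_set_eq,
      Set.ncard_prod] using this
  have hle₁ := hI.2 _ hJ₁
  have hle₂ := hK.2 _ hJ₂
  -- `|I| |K| ≤ |J| ≤ |π₁ J| |π₂ J| ≤ |I| |K|` with `|I|, |K| > 0` forces equality throughout.
  have hup := Set.card_le_card_image_fst_mul_card_image_snd J
  have hpos₁ : 0 < Nat.card I := have := hI.nonempty.to_subtype; Nat.card_pos
  have hpos₂ : 0 < Nat.card K := have := hK.nonempty.to_subtype; Nat.card_pos
  have heq₁ : Nat.card (Prod.fst '' J) = Nat.card I := by nlinarith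
  have heq₂ : Nat.card (Prod.snd '' J) = Nat.card K := by nlinarith
  refine ⟨⟨hJ₁, fun J' hJ' => heq₁ ▸ hI.2 J' hJ'⟩, ⟨hJ₂, fun J' hJ' => heq₂ ▸ hK.2 J' hJ'⟩, ?_⟩
  refine Set.eq_of_subset_of_ncard_le Set.subset_fst_image_prod_snd_image ?_
  rw [Set.ncard_prod, ← Nat.card_coe_set_eq, ← Nat.card_coe_set_eq, ← Nat.card_coe_set_eq,
    heq₁, heq₂]
  exact hIK

end ExtProd

theorem hasStrictEKR_extProd_iff_general {V W : Type*} [Fintype V] [Fintype W]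
    (G : Subgroup (Equiv.Perm V)) (H : Subgroup (Equiv.Perm W)) :
    HasStrictEKR (extProd G H) ↔ HasStrictEKR G ∧ HasStrictEKR H := by
  constructor
  · intro hGH
    obtain ⟨⟨v, w⟩⟩ := hGH.nonempty
    have : Nonempty V := ⟨v⟩
    have : Nonempty W := ⟨w⟩
    have hcoset {I : Set G} {K : Set H} (hI : IsMaxIntersecting G I)
        (hK : IsMaxIntersecting H K) : IsStabCoset G I ∧ IsStabCoset H K :=
      (isStabCoset_image_prod_iff hI.nonempty hK.nonempty).1
        (hGH _ (hI.image_prod hK).1 (hI.image_prod hK).2)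
    obtain ⟨I₀, hI₀⟩ := exists_isMaxIntersecting G
    obtain ⟨K₀, hK₀⟩ := exists_isMaxIntersecting H
    exact ⟨fun I h₁ h₂ => (hcoset ⟨h₁, h₂⟩ hK₀).1, fun K h₁ h₂ => (hcoset hI₀ ⟨h₁, h₂⟩).2⟩
  · rintro ⟨hG, hH⟩ S hS₁ hS₂
    have := hG.nonempty
    have := hH.nonempty
    obtain ⟨J, rfl⟩ := Set.image_surjective.2 (extProdEquiv G H).surjective S
    obtain ⟨hJ₁, hJ₂, hJ⟩ := IsMaxIntersecting.eq_image_prod ⟨hS₁, hS₂⟩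
    rw [hJ]
    exact (isStabCoset_image_prod_iff hJ₁.nonempty hJ₂.nonempty).2
      ⟨hG _ hJ₁.1 hJ₁.2, hH _ hJ₂.1 hJ₂.2⟩

/-- For transitive permutation groups `G ≤ Sym(V)` and `H ≤ Sym(W)` on
finite sets, the external direct product `G × H` has the strict-EKR-property iff both `G`
and `H` have the strict-EKR-property. -/
theorem hasStrictEKR_extProd_iff {V W : Type*} [Fintype V] [Fintype W]
    (G : Subgroup (Equiv.Perm V)) (H : Subgroup (Equiv.Perm W))
    (hG : IsTransitive G) (hH : IsTransitive H) :
    HasStrictEKR (extProd G H) ↔ HasStrictEKR G ∧ HasStrictEKR H :=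
  hasStrictEKR_extProd_iff_general G H
end

section
/- Let X be a finite vertex-transitive simple graph and n ≥ 1. Then the independence number of the n-fold tensor (direct) product X × X × ⋯ × X equals α(X)·|V(X)|^{n-1}. -/
/-! The cylinder `{f | f 0 ∈ A}` over a maximum independent set `A` of `X` is independent in
`X^n`, which gives `α(X^n) ≥ α(X) |V(X)|^(n-1)`. The reverse inequality is the no-homomorphism
lemma of Albertson and Collins applied to the diagonal `X →g X^n`, whose target is
vertex-transitive along with `X`: if `f : X →g Y` with `Y` vertex-transitive and `B` is a maximum
independent set of `Y`, then each `f ⁻¹' (σ⁻¹ B)`, `σ ∈ Aut Y`, is independent in `X`, and on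
average over `σ` it has `|B| |V(X)| / |V(Y)|` elements, so `α(Y) |V(X)| ≤ α(X) |V(Y)|`. -/

section IndepNum
variable {α β : Type*} {X : SimpleGraph α} {Y : SimpleGraph β}

lemma IsIndep.preimage {B : Set β} (hB : IsIndep Y B) (f : X →g Y) : IsIndep X (f ⁻¹' B) :=
  fun _ ha _ hb hab => hB _ ha _ hb (f.map_adj hab)

lemma nonempty_indepCards : {k : ℕ | ∃ A : Set α, IsIndep X A ∧ Nat.card A = k}.Nonempty :=
  ⟨0, ∅, by simp [IsIndep], by simp⟩

lemma indepNum_le {m : ℕ} (h : ∀ A : Set α, IsIndep X A → Nat.card A ≤ m) : indepNum X ≤ m :=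
  csSup_le nonempty_indepCards (by rintro k ⟨A, hA, rfl⟩; exact h A hA)

lemma indepNum_le_card [Finite α] : indepNum X ≤ Nat.card α :=
  indepNum_le fun _ _ => Nat.card_le_card_of_injective _ Subtype.val_injective

lemma bddAbove_indepCards [Finite α] :
    BddAbove {k : ℕ | ∃ A : Set α, IsIndep X A ∧ Nat.card A = k} :=
  ⟨Nat.card α, by
    rintro k ⟨A, -, rfl⟩
    exact Nat.card_le_card_of_injective _ Subtype.val_injective⟩

lemma le_indepNum [Finite α] {A : Set α} (hA : IsIndep X A) : Nat.card A ≤ indepNum X :=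
  le_csSup bddAbove_indepCards ⟨A, hA, rfl⟩

lemma exists_isIndep_card_eq_indepNum [Finite α] (X : SimpleGraph α) :
    ∃ A : Set α, IsIndep X A ∧ Nat.card A = indepNum X :=
  Nat.sSup_mem nonempty_indepCards bddAbove_indepCards

end IndepNum

instance SimpleGraph.Iso.finite {V W : Type*} [Finite V] [Finite W] {G : SimpleGraph V}
    {G' : SimpleGraph W} : Finite (G ≃g G') :=
  Finite.of_injective _ DFunLike.coe_injective

section VertexTransitive
variable {β : Type*} {Y : SimpleGraph β}

lemma IsVertexTransitive.card_iso_apply_eq (hY : IsVertexTransitive Y) (a b a' b' : β) :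
    Nat.card {σ : Y ≃g Y // σ a = b} = Nat.card {σ : Y ≃g Y // σ a' = b'} := by
  obtain ⟨e₁, he₁⟩ := hY a' a
  obtain ⟨e₂, he₂⟩ := hY b b'
  refine Nat.card_congr ⟨fun σ => ⟨(e₂.comp σ.1).comp e₁, by simp [he₁, σ.2, he₂]⟩,
    fun σ => ⟨(e₂.symm.comp σ.1).comp e₁.symm, by simp [← he₁, σ.2, ← he₂]⟩, ?_, ?_⟩
  · rintro ⟨σ, -⟩; ext; simp
  · rintro ⟨σ, -⟩; ext; simp

lemma IsVertexTransitive.card_iso_apply_mem_mul_card [Fintype β] (hY : IsVertexTransitive Y)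
    (y : β) (B : Set β) :
    Nat.card {σ : Y ≃g Y // σ y ∈ B} * Nat.card β = Nat.card (Y ≃g Y) * Nat.card B := by
  classical
  have := Fintype.ofFinite (Y ≃g Y)
  set c := Nat.card {σ : Y ≃g Y // σ y = y}
  have hfiber (b : β) : Nat.card {σ : Y ≃g Y // σ y = b} = c :=
    hY.card_iso_apply_eq y b y y
  have hall : Nat.card (Y ≃g Y) = Nat.card β * c := by
    rw [← Nat.card_congr (Equiv.sigmaFiberEquiv fun σ : Y ≃g Y => σ y), Nat.card_sigma,
      Finset.sum_congr rfl fun b _ => hfiber b, Finset.sum_const, smul_eq_mul, Finset.card_univ,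
      Nat.card_eq_fintype_card]
  have hmem : Nat.card {σ : Y ≃g Y // σ y ∈ B} = Nat.card B * c := by
    rw [← Nat.card_congr (Equiv.sigmaSubtypeFiberEquivSubtype (fun σ : Y ≃g Y => σ y)
      (q := (· ∈ B)) fun _ => Iff.rfl), Nat.card_sigma,
      Finset.sum_congr rfl fun b _ => hfiber b.1, Finset.sum_const, smul_eq_mul, Finset.card_univ,
      Nat.card_eq_fintype_card]
  rw [hall, hmem]; ring

end VertexTransitive

lemma Fintype.sum_card_subtype_comm {α β : Type*} [Fintype α] [Fintype β] (r : α → β → Prop) :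
    ∑ a, Nat.card {b // r a b} = ∑ b, Nat.card {a // r a b} := by
  classical
  simp only [Nat.card_eq_fintype_card, Fintype.card_subtype, Finset.card_filter]
  exact Finset.sum_comm

theorem indepNum_mul_card_le_of_hom {α β : Type*} [Fintype α] [Fintype β] {X : SimpleGraph α}
    {Y : SimpleGraph β} (hY : IsVertexTransitive Y) (f : X →g Y) :
    indepNum Y * Nat.card α ≤ indepNum X * Nat.card β := by
  have := Fintype.ofFinite (Y ≃g Y)
  obtain ⟨B, hB, hBcard⟩ := exists_isIndep_card_eq_indepNum Y
  have hslice (σ : Y ≃g Y) : Nat.card {x // σ (f x) ∈ B} ≤ indepNum X :=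
    le_indepNum (hB.preimage (σ.toHom.comp f))
  have hcount : (∑ x, Nat.card {σ : Y ≃g Y // σ (f x) ∈ B}) * Nat.card β
      = Nat.card (Y ≃g Y) * (indepNum Y * Nat.card α) := by
    rw [Finset.sum_mul, Finset.sum_congr rfl fun x _ => hY.card_iso_apply_mem_mul_card (f x) B,
      Finset.sum_const, Finset.card_univ, smul_eq_mul, hBcard, Fintype.card_eq_nat_card]
    ring
  have hslices : ∑ x, Nat.card {σ : Y ≃g Y // σ (f x) ∈ B} ≤ Nat.card (Y ≃g Y) * indepNum X :=
    calc ∑ x, Nat.card {σ : Y ≃g Y // σ (f x) ∈ B}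
        = ∑ σ : Y ≃g Y, Nat.card {x // σ (f x) ∈ B} :=
          Fintype.sum_card_subtype_comm fun x (σ : Y ≃g Y) => σ (f x) ∈ B
      _ ≤ ∑ _σ : Y ≃g Y, indepNum X := Finset.sum_le_sum fun σ _ => hslice σ
      _ = Nat.card (Y ≃g Y) * indepNum X := by
          rw [Finset.sum_const, Finset.card_univ, smul_eq_mul, Fintype.card_eq_nat_card]
  have hAut : 0 < Nat.card (Y ≃g Y) := Nat.card_pos_iff.mpr ⟨⟨.refl⟩, inferInstance⟩
  refine Nat.le_of_mul_le_mul_left ?_ hAut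
  calc Nat.card (Y ≃g Y) * (indepNum Y * Nat.card α)
      = (∑ x, Nat.card {σ : Y ≃g Y // σ (f x) ∈ B}) * Nat.card β := hcount.symm
    _ ≤ Nat.card (Y ≃g Y) * indepNum X * Nat.card β := Nat.mul_le_mul_right _ hslices
    _ = Nat.card (Y ≃g Y) * (indepNum X * Nat.card β) := mul_assoc _ _ _

section TensorPi
variable {ι : Type*} {α β : ι → Type*} {X : ∀ i, SimpleGraph (α i)} {Y : ∀ i, SimpleGraph (β i)}

def tensorPiCongr (e : ∀ i, X i ≃g Y i) : tensorPi X ≃g tensorPi Y where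
  toEquiv := Equiv.piCongrRight fun i => (e i).toEquiv
  map_rel_iff' {a b} := by
    simp only [tensorPi, Equiv.piCongrRight_apply, ne_eq, (Equiv.piCongrRight _).injective.eq_iff]
    exact and_congr_right fun _ => forall_congr' fun i => (e i).map_adj_iff

lemma IsVertexTransitive.tensorPi (h : ∀ i, IsVertexTransitive (X i)) :
    IsVertexTransitive (tensorPi X) := fun a b => by
  choose e he using fun i => h i (a i) (b i)
  exact ⟨tensorPiCongr e, funext he⟩

lemma indepNum_mul_prod_card_le_indepNum_tensorPi [Fintype ι] [DecidableEq ι] [∀ i, Finite (α i)]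
    (X : ∀ i, SimpleGraph (α i)) (i₀ : ι) :
    indepNum (X i₀) * ∏ i : {i // i ≠ i₀}, Nat.card (α i) ≤ indepNum (tensorPi X) := by
  obtain ⟨A, hA, hAcard⟩ := exists_isIndep_card_eq_indepNum (X i₀)
  have hcyl : IsIndep (tensorPi X) {f | f i₀ ∈ A} := fun f hf g hg hfg => hA _ hf _ hg (hfg.2 i₀)
  refine le_of_eq_of_le ?_ (le_indepNum hcyl)
  rw [← hAcard, ← Nat.card_pi, ← Nat.card_prod]
  exact Nat.card_congr (((Equiv.piSplitAt i₀ α).subtypeEquiv fun _ => Iff.rfl).trans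
    Equiv.prodSubtypeFstEquivSubtypeProd).symm

end TensorPi

def tensorPiDiag (ι : Type*) [Nonempty ι] {α : Type*} (X : SimpleGraph α) :
    X →g tensorPi fun _ : ι => X where
  toFun a _ := a
  map_rel' h := ⟨fun he => X.ne_of_adj h (congrFun he (Classical.arbitrary ι)), fun _ => h⟩

/-- For a finite vertex-transitive simple graph `X` and `n ≥ 1`, the
independence number of the `n`-fold tensor product `X × ⋯ × X` equals
`α(X) * |V(X)| ^ (n - 1)`. -/
theorem indepNum_tensorPow {α : Type*} [Fintype α] (X : SimpleGraph α)
    (hX : IsVertexTransitive X) (n : ℕ) (hn : 1 ≤ n) :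
    indepNum (tensorPi (fun _ : Fin n => X)) = indepNum X * Fintype.card α ^ (n - 1) := by
  obtain ⟨m, rfl⟩ : ∃ m, n = m + 1 := ⟨n - 1, by omega⟩
  rw [Nat.add_sub_cancel]
  have hprod : ∏ _i : {i : Fin (m + 1) // i ≠ 0}, Nat.card α = Fintype.card α ^ m := by
    simp
  have hlow := indepNum_mul_prod_card_le_indepNum_tensorPi (fun _ : Fin (m + 1) => X) 0
  rw [hprod] at hlow
  refine le_antisymm ?_ hlow
  rcases isEmpty_or_nonempty α
  · exact indepNum_le_card.trans (by simp)
  · have hup := indepNum_mul_card_le_of_hom (IsVertexTransitive.tensorPi fun _ => hX)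
      (tensorPiDiag (Fin (m + 1)) X)
    rw [Nat.card_pi, Finset.prod_const, Finset.card_univ, Fintype.card_fin, pow_succ,
      ← mul_assoc, Nat.card_eq_fintype_card] at hup
    exact Nat.le_of_mul_le_mul_right hup Fintype.card_pos
end

section
/- Let G ≤ Sym(V) and H ≤ Sₙ be transitive permutation groups, and let G ≀ H act on V × {1,…,n} by ((g₁,…,gₙ),h)·(a,i) = (g_i(a), h(i)). Then the intersection densities satisfy ρ(G) ≤ ρ(G ≀ H) ≤ ρ(G)·ρ(H). -/
/-!
Write an element of `G ≀ H` as a pair `(g, h)` with `g : Fin n → G` and `h ∈ H`; the stabilizer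
of `(v, i)` consists of the pairs with `g i ∈ G_v` and `h ∈ H_i`, so it has `|G_v| |G|^(n-1) |H_i|`
elements. Replacing `G_v` by an intersecting set `I` of `G` gives an intersecting set of `G ≀ H`
with the same ratio `|I| / |G_v|`, whence `ρ(G) ≤ ρ(G ≀ H)`.

Conversely, an intersecting set of `G ≀ H` projects onto an intersecting set of `H`, of size at
most `ρ(H) |H_i|`, and each fibre of the projection is a family `F ⊆ Gⁿ` any two members of which
agree at some point of some coordinate. For fixed `f ∈ Gⁿ` the `c ∈ G` with `c • f ∈ F` form an
intersecting set of `G`, so double counting the pairs `(c, f)` gives `|G| |F| ≤ |G|ⁿ ρ(G) |G_v|`.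
Multiplying the two bounds gives `ρ(G ≀ H) ≤ ρ(G) ρ(H)`.
-/

section InterDensity

variable {V : Type*} {G : Subgroup (Equiv.Perm V)}

lemma isIntersecting_empty : IsIntersecting G ∅ := fun _ hg => hg.elim

variable (G) in
lemma card_stabSet_pos [Finite V] (v : V) :
    0 < Nat.card (stabSet G v) :=
  have : Nonempty (stabSet G v) := ⟨⟨1, rfl⟩⟩
  Nat.card_pos

lemma card_le_interDensity_mul [Finite V] {I : Set G} (hI : IsIntersecting G I) (v : V) :
    (Nat.card I : ℝ) ≤ interDensity G * Nat.card (stabSet G v) := by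
  rw [← div_le_iff₀ (by exact_mod_cast card_stabSet_pos G v)]
  refine le_csSup ⟨Nat.card G, ?_⟩ ⟨I, v, hI, rfl⟩
  rintro _ ⟨J, w, -, rfl⟩
  calc (Nat.card J : ℝ) / Nat.card (stabSet G w) ≤ Nat.card J :=
        div_le_self (Nat.cast_nonneg _) (by exact_mod_cast card_stabSet_pos G w)
    _ ≤ Nat.card G := by exact_mod_cast Finite.card_subtype_le _

lemma interDensity_le [Finite V] [Nonempty V] {c : ℝ}
    (h : ∀ I, IsIntersecting G I → ∀ v, (Nat.card I : ℝ) ≤ c * Nat.card (stabSet G v)) :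
    interDensity G ≤ c := by
  refine csSup_le ⟨0, ∅, Classical.arbitrary V, isIntersecting_empty, by simp⟩ ?_
  rintro _ ⟨I, v, hI, rfl⟩
  rw [div_le_iff₀ (by exact_mod_cast card_stabSet_pos G v)]
  exact h I hI v

lemma interDensity_nonneg [Finite V] [Nonempty V] : 0 ≤ interDensity G := by
  have hv := card_stabSet_pos G (Classical.arbitrary V)
  have := card_le_interDensity_mul (G := G) isIntersecting_empty (Classical.arbitrary V)
  rw [Nat.card_of_isEmpty, Nat.cast_zero] at this
  exact nonneg_of_mul_nonneg_left this (by exact_mod_cast hv)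

end InterDensity

section Counting

lemma card_le_card_image_snd_mul {α β : Type*} [Finite α] [Finite β] {S : Set (α × β)} {M : ℝ}
    (hS : ∀ b, (Nat.card {a | (a, b) ∈ S} : ℝ) ≤ M) :
    (Nat.card S : ℝ) ≤ Nat.card (Prod.snd '' S) * M := by
  classical
  have := Fintype.ofFinite α
  have := Fintype.ofFinite β
  have hfiber (b : β) :
      (S.toFinset.filter fun p => p.2 = b).card = Nat.card {a | (a, b) ∈ S} := by
    rw [Nat.card_eq_card_toFinset]
    refine Finset.card_nbij' Prod.fst (·, b) ?_ ?_ ?_ ?_ <;>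
      grind [Set.MapsTo, Set.LeftInvOn]
  rw [Nat.card_eq_card_toFinset S, Nat.card_eq_card_toFinset (Prod.snd '' S),
    Set.toFinset_image, Finset.card_eq_sum_card_image Prod.snd S.toFinset, ← nsmul_eq_mul]
  push_cast
  exact Finset.sum_le_card_nsmul _ _ _ fun b _ => hfiber b ▸ hS b

lemma card_setOf_apply_mem {ι α : Type*} [Fintype ι] [DecidableEq ι] (i : ι) (A : Set α) :
    Nat.card {f : ι → α | f i ∈ A} = Nat.card A * Nat.card α ^ (Fintype.card ι - 1) := by
  have e : {f : ι → α | f i ∈ A} ≃ A × ({j // j ≠ i} → α) :=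
    ((Equiv.funSplitAt i α).subtypeEquiv fun _ => Iff.rfl).trans
      Equiv.prodSubtypeFstEquivSubtypeProd
  rw [Nat.card_congr e, Nat.card_prod, Nat.card_fun, Nat.card_eq_fintype_card
    (α := {j // j ≠ i}), Fintype.card_subtype_compl, Fintype.card_subtype_eq]

variable {V ι : Type*} [Finite V] [Fintype ι] [Nonempty ι] {G : Subgroup (Equiv.Perm V)}

lemma card_le_of_forall_exists_apply_eq {F : Set (ι → G)}
    (hF : ∀ f ∈ F, ∀ f' ∈ F, ∃ i v, (f i : Equiv.Perm V) v = (f' i : Equiv.Perm V) v)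
    {M : ℝ} (hM : ∀ I, IsIntersecting G I → (Nat.card I : ℝ) ≤ M) :
    (Nat.card F : ℝ) ≤ Nat.card G ^ (Fintype.card ι - 1) * M := by
  classical
  have := Fintype.ofFinite G
  have hcount : (Fintype.card G : ℝ) * Nat.card F ≤ Fintype.card (ι → G) * M := by
    have := Finset.card_nsmul_le_card_nsmul (s := Finset.univ) (t := Finset.univ)
      (fun (c : G) (f : ι → G) => c • f ∈ F) (m := (Nat.card F : ℝ)) (n := M) ?_ ?_
    · simpa [nsmul_eq_mul] using this
    · intro c _
      rw [Finset.bipartiteAbove, ← Fintype.card_subtype, ← Nat.card_eq_fintype_card]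
      exact_mod_cast (Nat.card_congr
        ((MulAction.toPerm c).subtypeEquiv fun _ => Iff.rfl : {f // c • f ∈ F} ≃ F)).ge
    · intro f _
      rw [Finset.bipartiteBelow, ← Fintype.card_subtype, ← Nat.card_eq_fintype_card]
      refine hM {c | c • f ∈ F} fun c hc c' hc' => ?_
      obtain ⟨i, v, hv⟩ := hF _ hc _ hc'
      exact ⟨(f i : Equiv.Perm V) v, hv⟩
  have hG : (0 : ℝ) < Fintype.card G := by exact_mod_cast Fintype.card_pos
  rw [Fintype.card_fun, ← Nat.sub_add_cancel (Fintype.card_pos (α := ι)), pow_succ] at hcount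
  rw [Nat.card_eq_fintype_card (α := G)]
  push_cast at hcount
  exact le_of_mul_le_mul_left (by linear_combination hcount) hG

end Counting

section Wreath

variable {V : Type*} {n : ℕ} {G : Subgroup (Equiv.Perm V)} {H : Subgroup (Equiv.Perm (Fin n))}

variable (G H) in
def wreathMk (p : (Fin n → G) × H) : wreathProd G H :=
  ⟨wreathPerm (fun i => p.1 i) p.2, _, _, fun i => (p.1 i).2, p.2.2, rfl⟩

@[simp]
lemma wreathMk_apply (p : (Fin n → G) × H) (v : V) (i : Fin n) :
    (wreathMk G H p : Equiv.Perm (V × Fin n)) (v, i) =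
      ((p.1 i : Equiv.Perm V) v, (p.2 : Equiv.Perm (Fin n)) i) :=
  rfl

lemma wreathMk_surjective : Function.Surjective (wreathMk G H) := by
  rintro ⟨_, g, h, hg, hh, rfl⟩
  exact ⟨(fun i => ⟨g i, hg i⟩, ⟨h, hh⟩), rfl⟩

lemma wreathMk_injective [Nonempty V] : Function.Injective (wreathMk G H) := by
  intro p q hpq
  have hpq' (v : V) (i : Fin n) := congrArg (· (v, i)) (congrArg Subtype.val hpq)
  simp only [wreathMk_apply, Prod.mk.injEq] at hpq'
  obtain ⟨v⟩ := ‹Nonempty V›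
  exact Prod.ext (funext fun i => Subtype.ext <| Equiv.ext fun w => (hpq' w i).1)
    (Subtype.ext <| Equiv.ext fun i => (hpq' v i).2)

variable (H) in
def wreathBox (A : Set G) (i : Fin n) (B : Set H) : Set (wreathProd G H) :=
  wreathMk G H '' {p | p.1 i ∈ A ∧ p.2 ∈ B}

lemma card_wreathBox [Finite V] [Nonempty V] (A : Set G) (i : Fin n) (B : Set H) :
    Nat.card (wreathBox H A i B) = Nat.card A * Nat.card G ^ (n - 1) * Nat.card B := by
  rw [wreathBox, Nat.card_image_of_injective wreathMk_injective,
    show {p : (Fin n → G) × H | p.1 i ∈ A ∧ p.2 ∈ B} = {f | f i ∈ A} ×ˢ B from rfl,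
    Nat.card_congr (Equiv.Set.prod _ _), Nat.card_prod, card_setOf_apply_mem, Fintype.card_fin]

lemma stabSet_wreathProd [Nonempty V] (v : V) (i : Fin n) :
    stabSet (wreathProd G H) (v, i) = wreathBox H (stabSet G v) i (stabSet H i) := by
  ext σ
  obtain ⟨p, rfl⟩ := wreathMk_surjective σ
  simp [wreathBox, wreathMk_injective.mem_set_image, stabSet]

lemma IsIntersecting.wreathBox {I : Set G} (hI : IsIntersecting G I) (i : Fin n) :
    IsIntersecting (wreathProd G H) (wreathBox H I i (stabSet H i)) := by
  rintro _ ⟨p, ⟨hp, hpi⟩, rfl⟩ _ ⟨q, ⟨hq, hqi⟩, rfl⟩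
  obtain ⟨v, hv⟩ := hI _ hp _ hq
  exact ⟨(v, i), by simp_all [stabSet]⟩

lemma card_le_interDensity_mul_interDensity_mul [Finite V] [Nonempty V]
    {I : Set (wreathProd G H)} (hI : IsIntersecting (wreathProd G H) I) (v : V) (i : Fin n) :
    (Nat.card I : ℝ) ≤
      interDensity G * interDensity H * Nat.card (stabSet (wreathProd G H) (v, i)) := by
  have : Nonempty (Fin n) := ⟨i⟩
  set S := wreathMk G H ⁻¹' I
  have hS : Nat.card S = Nat.card I := Nat.card_preimage_of_injective wreathMk_injective
    (wreathMk_surjective.range_eq ▸ Set.subset_univ I)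
  have hfiber (h : H) : (Nat.card {g | (g, h) ∈ S} : ℝ) ≤
      Nat.card G ^ (n - 1) * (interDensity G * Nat.card (stabSet G v)) := by
    refine (card_le_of_forall_exists_apply_eq (F := {g | (g, h) ∈ S}) (fun g hg g' hg' => ?_)
      fun J hJ => card_le_interDensity_mul hJ v).trans_eq (by rw [Fintype.card_fin])
    obtain ⟨⟨w, j⟩, hw⟩ := hI _ hg _ hg'
    exact ⟨j, w, congrArg Prod.fst hw⟩
  have hbase : (Nat.card (Prod.snd '' S) : ℝ) ≤ interDensity H * Nat.card (stabSet H i) := by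
    refine card_le_interDensity_mul ?_ i
    rintro _ ⟨p, hp, rfl⟩ _ ⟨q, hq, rfl⟩
    obtain ⟨⟨w, j⟩, hw⟩ := hI _ hp _ hq
    exact ⟨j, congrArg Prod.snd hw⟩
  rw [← hS, stabSet_wreathProd, card_wreathBox]
  calc (Nat.card S : ℝ)
      ≤ Nat.card (Prod.snd '' S) *
          (Nat.card G ^ (n - 1) * (interDensity G * Nat.card (stabSet G v))) :=
        card_le_card_image_snd_mul hfiber
    _ ≤ interDensity H * Nat.card (stabSet H i) *
          (Nat.card G ^ (n - 1) * (interDensity G * Nat.card (stabSet G v))) := by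
        have := interDensity_nonneg (G := G)
        gcongr
    _ = _ := by push_cast; ring

end Wreath

theorem interDensity_wreathProd_bounds_general {V : Type*} [Fintype V] [Nonempty V] {n : ℕ}
    (hn : 0 < n) (G : Subgroup (Equiv.Perm V)) (H : Subgroup (Equiv.Perm (Fin n))) :
    interDensity G ≤ interDensity (wreathProd G H) ∧
      interDensity (wreathProd G H) ≤ interDensity G * interDensity H := by
  let i₀ : Fin n := ⟨0, hn⟩
  have : Nonempty (Fin n) := ⟨i₀⟩
  refine ⟨interDensity_le fun I hI v => ?_, interDensity_le fun I hI ⟨v, i⟩ =>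
    card_le_interDensity_mul_interDensity_mul hI v i⟩
  have hbox := card_le_interDensity_mul (hI.wreathBox (H := H) i₀) (v, i₀)
  rw [stabSet_wreathProd, card_wreathBox, card_wreathBox] at hbox
  push_cast at hbox
  have hpos : (0 : ℝ) < Nat.card G ^ (n - 1) * Nat.card (stabSet H i₀) := by
    have := card_stabSet_pos H i₀
    have : 0 < Nat.card G := Nat.card_pos
    positivity
  exact le_of_mul_le_mul_right (by linear_combination hbox) hpos

/-- For transitive permutation groups `G ≤ Sym(V)` and `H ≤ Sₙ`, the
intersection density of the wreath product satisfies `ρ(G) ≤ ρ(G ≀ H) ≤ ρ(G) * ρ(H)`. -/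
theorem interDensity_wreathProd_bounds {V : Type*} [Fintype V] [Nonempty V] {n : ℕ}
    (hn : 0 < n) (G : Subgroup (Equiv.Perm V)) (H : Subgroup (Equiv.Perm (Fin n)))
    (hG : IsTransitive G) (hH : IsTransitive H) :
    interDensity G ≤ interDensity (wreathProd G H) ∧
      interDensity (wreathProd G H) ≤ interDensity G * interDensity H :=
  interDensity_wreathProd_bounds_general hn G H
end

section
/- The wreath product S₃ ≀ S₂, acting on {1,2,3} × {1,2} by ((g₁,g₂),h)·(a,i) = (g_i(a), h(i)), does not have the strict-EKR-property. -/
/-!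
The translations of the group `ℤ/3 × ℤ/2` form a regular subgroup `R` of `W = S₃ ≀ S₂`. Two
distinct elements of a left coset of `R` disagree at every point, so an intersecting set meets
each of the `|W| / |R| = 72 / 6 = 12` cosets at most once.

In the base group, `{(1, g)} ∪ {(t, s) : t odd, s 2 = 2}` is an intersecting set of this maximal
size `12`: two elements with first coordinate `1` agree on the first block, an element with first
coordinate `1` and one with odd first coordinate agree there too because odd permutations of
three points have a fixed point, and two elements with odd first coordinate agree at `(2, 1)`.
No point is mapped to the same place by all its elements, so it is not a coset of a point
stabilizer.
-/

open Equiv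

section Intersecting

variable {V : Type*}

theorem IsIntersecting.card_le_index {G : Subgroup (Perm V)} [Finite G] {I : Set G}
    (hI : IsIntersecting G I) {R : Subgroup G}
    (hR : ∀ r ∈ R, ∀ v, (r : Perm V) v = v → r = 1) :
    Nat.card I ≤ R.index := by
  refine Nat.card_le_card_of_injective (fun x : I => (x.1 : G ⧸ R)) fun x y hxy => ?_
  obtain ⟨v, hv⟩ := hI x x.2 y y.2
  have hfix : ((x.1⁻¹ * y.1 : G) : Perm V) v = v := by
    simp [Equiv.symm_apply_eq, hv]
  exact Subtype.ext (inv_mul_eq_one.1 (hR _ (QuotientGroup.eq.1 hxy) v hfix))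

theorem IsRegularGroup.card_eq {R : Subgroup (Perm V)} (hR : IsRegularGroup R) (v : V) :
    Nat.card R = Nat.card V := by
  refine Nat.card_eq_of_bijective (fun r : R => (r : Perm V) v) ⟨fun r s hrs => ?_, fun w => ?_⟩
  · have hfix : ((r⁻¹ * s : R) : Perm V) v = v := by
      simp [Equiv.symm_apply_eq, hrs]
    exact inv_mul_eq_one.1 (Subtype.ext (hR.2 _ (r⁻¹ * s).2 v hfix))
  · obtain ⟨g, hg, hgv⟩ := hR.1 v w
    exact ⟨⟨g, hg⟩, hgv⟩

theorem IsIntersecting.card_mul_card_le [Finite V] {G R : Subgroup (Perm V)} {I : Set G}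
    (hI : IsIntersecting G I) (hRG : R ≤ G) (hR : IsRegularGroup R) :
    Nat.card I * Nat.card V ≤ Nat.card G := by
  rcases isEmpty_or_nonempty V with _ | ⟨⟨v⟩⟩
  · simp
  have hindex : Nat.card I ≤ (R.subgroupOf G).index :=
    hI.card_le_index fun r hr w hw => Subtype.ext (hR.2 r hr w hw)
  calc Nat.card I * Nat.card V ≤ (R.subgroupOf G).index * Nat.card (R.subgroupOf G) := by
        rw [Nat.card_congr (Subgroup.subgroupOfEquivOfLe hRG).toEquiv, hR.card_eq v]
        exact Nat.mul_le_mul_right _ hindex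
    _ = Nat.card G := (R.subgroupOf G).index_mul_card

theorem not_hasStrictEKR_of_forall_exists_ne {G : Subgroup (Perm V)} {I : Set G}
    (hI : IsIntersecting G I) (hmax : ∀ J : Set G, IsIntersecting G J → Nat.card J ≤ Nat.card I)
    (hspread : ∀ v, ∃ x ∈ I, ∃ y ∈ I, (x : Perm V) v ≠ (y : Perm V) v) :
    ¬ HasStrictEKR G := by
  intro hS
  obtain ⟨v, a, rfl⟩ := hS I hI hmax
  obtain ⟨_, ⟨g, hg, rfl⟩, _, ⟨g', hg', rfl⟩, hne⟩ := hspread v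
  simp only [Subgroup.coe_mul, Perm.mul_apply] at hne
  exact hne (by rw [show (g : Perm V) v = v from hg, show (g' : Perm V) v = v from hg'])

end Intersecting

def translations (A : Type*) [AddGroup A] : Subgroup (Perm A) where
  carrier := Set.range Equiv.addLeft
  one_mem' := ⟨0, Equiv.addLeft_zero⟩
  mul_mem' := by
    rintro _ _ ⟨a, rfl⟩ ⟨b, rfl⟩
    exact ⟨a + b, Equiv.addLeft_add a b⟩
  inv_mem' := by
    rintro _ ⟨a, rfl⟩
    exact ⟨-a, (Equiv.neg_addLeft a).symm⟩

theorem isRegularGroup_translations (A : Type*) [AddGroup A] :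
    IsRegularGroup (translations A) := by
  refine ⟨fun v w => ⟨Equiv.addLeft (w - v), ⟨_, rfl⟩, by simp⟩, ?_⟩
  rintro _ ⟨a, rfl⟩ v hv
  rw [Equiv.coe_addLeft, add_eq_right] at hv
  rw [hv, Equiv.addLeft_zero]

section Wreath

variable {V : Type*} {n : ℕ}

theorem wreathPerm_apply (g : Fin n → Perm V) (h : Perm (Fin n)) (p : V × Fin n) :
    wreathPerm g h p = (g p.2 p.1, h p.2) := rfl

theorem wreathPerm_inj [Nonempty V] {g g' : Fin n → Perm V} {h h' : Perm (Fin n)} :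
    wreathPerm g h = wreathPerm g' h' ↔ g = g' ∧ h = h' := by
  refine ⟨fun heq => ⟨funext fun i => Equiv.ext fun a => ?_, Equiv.ext fun i => ?_⟩,
    fun ⟨hg, hh⟩ => hg ▸ hh ▸ rfl⟩
  · exact congrArg Prod.fst (DFunLike.congr_fun heq (a, i))
  · exact congrArg Prod.snd (DFunLike.congr_fun heq (Classical.arbitrary V, i))

theorem card_wreathProd [Nonempty V] (G : Subgroup (Perm V)) (H : Subgroup (Perm (Fin n))) :
    Nat.card (wreathProd G H) = Nat.card G ^ n * Nat.card H := by
  let f : (Fin n → G) × H → wreathProd G H := fun p =>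
    ⟨wreathPerm (fun i => p.1 i) p.2, fun i => p.1 i, p.2, fun i => (p.1 i).2, p.2.2, rfl⟩
  have hf : Function.Bijective f := by
    refine ⟨fun p q hpq => ?_, fun ⟨σ, g, h, hg, hh, hσ⟩ => ⟨(fun i => ⟨g i, hg i⟩, ⟨h, hh⟩),
      Subtype.ext hσ.symm⟩⟩
    have heq : wreathPerm (fun i => (p.1 i : Perm V)) p.2 = wreathPerm (fun i => q.1 i) q.2 :=
      congrArg Subtype.val hpq
    obtain ⟨hg, hh⟩ := wreathPerm_inj.1 heq
    exact Prod.ext (funext fun i => Subtype.ext (congrFun hg i)) (Subtype.ext hh)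
  rw [← Nat.card_eq_of_bijective f hf, Nat.card_prod, Nat.card_fun, Nat.card_fin]

theorem translations_le_wreathProd [AddGroup V] [NeZero n] {G : Subgroup (Perm V)}
    {H : Subgroup (Perm (Fin n))} (hG : translations V ≤ G) (hH : translations (Fin n) ≤ H) :
    translations (V × Fin n) ≤ wreathProd G H := by
  rintro _ ⟨⟨a, i⟩, rfl⟩
  exact ⟨fun _ => Equiv.addLeft a, Equiv.addLeft i, fun _ => hG ⟨a, rfl⟩, hH ⟨i, rfl⟩, rfl⟩

end Wreath

-- `a⁻¹ * b` is odd, hence a transposition, and a transposition of three points fixes one.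
theorem Equiv.Perm.exists_apply_eq_of_sign_ne_of_fin_three :
    ∀ a b : Perm (Fin 3), Perm.sign a ≠ Perm.sign b → ∃ x, a x = b x := by
  decide

abbrev S3WrS2 : Subgroup (Perm (Fin 3 × Fin 2)) := wreathProd ⊤ ⊤

theorem card_S3WrS2 : Nat.card S3WrS2 = 72 := by
  rw [card_wreathProd, Subgroup.card_top, Subgroup.card_top, Nat.card_perm, Nat.card_perm,
    Nat.card_fin, Nat.card_fin]
  rfl

def S3WrS2.ofBase (g : Fin 2 → Perm (Fin 3)) : S3WrS2 :=
  ⟨wreathPerm g 1, g, 1, fun _ => trivial, trivial, rfl⟩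

def exceptionalBase : Set (Fin 2 → Perm (Fin 3)) :=
  {g | g 0 = 1 ∨ (Perm.sign (g 0) = -1 ∧ g 1 2 = 2)}

def exceptionalSet : Set S3WrS2 := S3WrS2.ofBase '' exceptionalBase

theorem card_exceptionalSet : Nat.card exceptionalSet = 12 := by
  rw [exceptionalSet, Nat.card_image_of_injective, exceptionalBase, Nat.card_eq_fintype_card]
  · rfl
  · intro g g' h
    exact (wreathPerm_inj.1 (congrArg Subtype.val h)).1

theorem isIntersecting_exceptionalSet : IsIntersecting S3WrS2 exceptionalSet := by
  rintro _ ⟨g, hg, rfl⟩ _ ⟨g', hg', rfl⟩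
  simp only [S3WrS2.ofBase, Prod.exists, wreathPerm_apply, Prod.mk.injEq, and_true]
  rcases hg with h0 | ⟨hodd, h2⟩ <;> rcases hg' with h0' | ⟨hodd', h2'⟩
  · exact ⟨0, 0, by rw [h0, h0']⟩
  · obtain ⟨x, hx⟩ := Perm.exists_apply_eq_of_sign_ne_of_fin_three (g 0) (g' 0)
      (by simp [h0, hodd'])
    exact ⟨x, 0, hx⟩
  · obtain ⟨x, hx⟩ := Perm.exists_apply_eq_of_sign_ne_of_fin_three (g 0) (g' 0)
      (by simp [h0', hodd])
    exact ⟨x, 0, hx⟩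
  · exact ⟨2, 1, by rw [h2, h2']⟩

theorem exceptionalSet_not_constant (v : Fin 3 × Fin 2) :
    ∃ x ∈ exceptionalSet, ∃ y ∈ exceptionalSet,
      (x : Perm (Fin 3 × Fin 2)) v ≠ (y : Perm (Fin 3 × Fin 2)) v := by
  obtain ⟨a, i⟩ := v
  obtain ⟨b, hb⟩ := exists_ne a
  refine ⟨_, ⟨1, Or.inl rfl, rfl⟩, _, ⟨Pi.mulSingle i (swap a b), ?_, rfl⟩, ?_⟩
  · fin_cases i
    · exact Or.inr ⟨by simp [Perm.sign_swap hb.symm], rfl⟩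
    · exact Or.inl rfl
  · simp [S3WrS2.ofBase, wreathPerm_apply, hb.symm]

/-- The wreath product `S₃ ≀ S₂`, acting on `{1,2,3} × {1,2}`, does not
have the strict-EKR-property. -/
theorem S3_wr_S2_not_hasStrictEKR :
    ¬ HasStrictEKR (wreathProd (⊤ : Subgroup (Equiv.Perm (Fin 3)))
        (⊤ : Subgroup (Equiv.Perm (Fin 2)))) := by
  refine not_hasStrictEKR_of_forall_exists_ne isIntersecting_exceptionalSet (fun J hJ => ?_)
    exceptionalSet_not_constant
  have hbound := hJ.card_mul_card_le (translations_le_wreathProd le_top le_top)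
    (isRegularGroup_translations (Fin 3 × Fin 2))
  rw [card_S3WrS2, Nat.card_prod, Nat.card_fin, Nat.card_fin] at hbound
  rw [card_exceptionalSet]
  omega
end

section
/- Let G ≤ Sym(V) with |V| ≥ 3 and H ≤ Sₙ be transitive permutation groups. If the internal direct product Gⁿ = G × ⋯ × G (n factors, acting componentwise on the disjoint union of n copies of V) has the strict-EKR-property and H has the EKR-property, then the wreath product G ≀ H (acting on V × {1,…,n}) has the strict-EKR-property. -/
/-! Write `σ ∈ G ≀ H` as `(k, η) ∈ Gⁿ × H` and slice a maximum intersecting set `I` along `η`.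
Each slice is intersecting in `Gⁿ` and the `η` that occur form an intersecting set of `H`, so
`|I| ≤ |H_i| |Gⁿ_p|`, which is the size of a point stabilizer of `G ≀ H`. Hence every nonempty
slice is a maximum intersecting set of `Gⁿ`, i.e. of the form `{k | k ⟨i, v⟩ = ⟨i, w⟩}`. Testing
`I` against pairs whose base tuples differ by a derangement of `G` in all coordinates but one
shows that all slices use the same coordinate `i`, that all occurring `η` agree at `i`, and that
the slices are cross-intersecting; by maximality they coincide, so all of `I` sends one point to
one point and is a coset of its stabilizer. -/

open Equiv

section PermutationGroup

variable {V : Type*} {G : Subgroup (Perm V)}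

theorem IsIntersecting.mono {A B : Set G} (hB : IsIntersecting G B) (hAB : A ⊆ B) :
    IsIntersecting G A :=
  fun g hg h hh => hB g (hAB hg) h (hAB hh)

theorem IsIntersecting.union {A B : Set G} (hA : IsIntersecting G A) (hB : IsIntersecting G B)
    (hAB : ∀ a ∈ A, ∀ b ∈ B, ∃ v, (a : Perm V) v = (b : Perm V) v) :
    IsIntersecting G (A ∪ B) := by
  rintro g (hg | hg) h (hh | hh)
  · exact hA g hg h hh
  · exact hAB g hg h hh
  · obtain ⟨v, hv⟩ := hAB h hh g hg
    exact ⟨v, hv.symm⟩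
  · exact hB g hg h hh

theorem isIntersecting_setOf_apply_eq (v w : V) :
    IsIntersecting G {g : G | (g : Perm V) v = w} :=
  fun _ hg _ hh => ⟨v, hg.trans hh.symm⟩

theorem image_mul_stabSet (a : G) (v : V) :
    (fun g => a * g) '' stabSet G v = {g : G | (g : Perm V) v = (a : Perm V) v} := by
  ext g
  constructor
  · rintro ⟨b, hb, rfl⟩
    exact congrArg (a : Perm V) hb
  · intro hg
    exact ⟨a⁻¹ * g, Perm.inv_eq_iff_eq.mpr hg, mul_inv_cancel_left a g⟩

theorem card_stabSet_eq_of_isTransitive (hG : IsTransitive G) (v w : V) :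
    Nat.card (stabSet G v) = Nat.card (stabSet G w) := by
  obtain ⟨g, hg, rfl⟩ := hG v w
  exact Nat.card_congr (MulAction.stabilizerEquivStabilizer (g := (⟨g, hg⟩ : G)) rfl).toEquiv

theorem HasEKR.card_le_card_stabSet (hEKR : HasEKR G) (hG : IsTransitive G) {J : Set G}
    (hJ : IsIntersecting G J) (v : V) : Nat.card J ≤ Nat.card (stabSet G v) := by
  have : Nonempty V := ⟨v⟩
  simpa only [card_stabSet_eq_of_isTransitive hG _ v, ciSup_const] using hEKR J hJ

theorem nonempty_of_forall_card_le [Finite G] [Nonempty V] {I : Set G}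
    (hmax : ∀ J, IsIntersecting G J → Nat.card J ≤ Nat.card I) : I.Nonempty := by
  obtain ⟨v⟩ := ‹Nonempty V›
  have : Nonempty (stabSet G v) := ⟨⟨1, rfl⟩⟩
  have hpos := Nat.card_pos.trans_le (hmax (stabSet G v) (isIntersecting_setOf_apply_eq v v))
  exact Set.nonempty_coe_sort.mp (Nat.card_pos_iff.mp hpos).1

theorem IsIntersecting.subset_of_forall_card_le [Finite G] {A B : Set G}
    (hA : IsIntersecting G A) (hAmax : ∀ J, IsIntersecting G J → Nat.card J ≤ Nat.card A)
    (hB : IsIntersecting G B) (hAB : ∀ a ∈ A, ∀ b ∈ B, ∃ v, (a : Perm V) v = (b : Perm V) v) :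
    B ⊆ A := by
  have hU : A = A ∪ B := Set.eq_of_subset_of_ncard_le Set.subset_union_left
    (by simpa only [Nat.card_coe_set_eq] using hAmax _ (hA.union hB hAB))
  exact Set.union_eq_left.mp hU.symm

theorem HasStrictEKR.exists_forall_card_le [Finite G] (hG : HasStrictEKR G) :
    ∃ v, ∀ J : Set G, IsIntersecting G J → Nat.card J ≤ Nat.card (stabSet G v) := by
  obtain ⟨I, hI, hmax⟩ := Set.exists_max_image {J : Set G | IsIntersecting G J}
    (fun J => Nat.card J) (Set.toFinite _) ⟨∅, fun _ h => h.elim⟩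
  obtain ⟨v, a, rfl⟩ := hG I hI hmax
  exact ⟨v, fun J hJ =>
    (hmax J hJ).trans (Nat.card_image_of_injective (mul_right_injective a) _).le⟩

theorem HasStrictEKR.eq_setOf_apply_eq (hG : HasStrictEKR G) {I : Set G}
    (hI : IsIntersecting G I) (hmax : ∀ J, IsIntersecting G J → Nat.card J ≤ Nat.card I) :
    ∃ v w, I = {g : G | (g : Perm V) v = w} := by
  obtain ⟨v, a, rfl⟩ := hG I hI hmax
  exact ⟨v, _, image_mul_stabSet a v⟩

theorem exists_eq_image_mul_stabSet_of_subset [Finite G] {I : Set G}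
    (hmax : ∀ J, IsIntersecting G J → Nat.card J ≤ Nat.card I) {v w : V}
    (hsub : I ⊆ {g : G | (g : Perm V) v = w}) : ∃ a : G, I = (fun g => a * g) '' stabSet G v := by
  have : Nonempty V := ⟨v⟩
  obtain ⟨a, ha⟩ := nonempty_of_forall_card_le hmax
  refine ⟨a, ?_⟩
  rw [image_mul_stabSet, show (a : Perm V) v = w from hsub ha]
  exact Set.eq_of_subset_of_ncard_le hsub
    (by simpa only [Nat.card_coe_set_eq] using hmax _ (isIntersecting_setOf_apply_eq v w))

theorem IsTransitive.exists_mem_forall_apply_ne [Fintype V] (hG : IsTransitive G)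
    (hV : 2 ≤ Fintype.card V) : ∃ d ∈ G, ∀ a, d a ≠ a := by
  classical
  have : MulAction.IsPretransitive G V :=
    ⟨fun v w => let ⟨g, hg, hgv⟩ := hG v w; ⟨⟨g, hg⟩, hgv⟩⟩
  have : Subsingleton (MulAction.orbitRel.Quotient G V) :=
    (MulAction.pretransitive_iff_subsingleton_quotient G V).mp this
  have : Nonempty V := Fintype.card_pos_iff.mp (by omega)
  have hone : Fintype.card (MulAction.orbitRel.Quotient G V) = 1 :=
    Fintype.card_eq_one_iff.mpr ⟨⟦Classical.arbitrary V⟧, fun _ => Subsingleton.elim _ _⟩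
  have burnside := MulAction.sum_card_fixedBy_eq_card_orbits_mul_card_group G V
  by_contra! hfix
  -- Burnside: the fixed-point counts average to 1, yet all are positive and `1` fixes `|V| ≥ 2`.
  have : ∑ _g : G, 1 < ∑ g : G, Fintype.card (MulAction.fixedBy V g) := by
    refine Finset.sum_lt_sum (fun g _ => ?_) ⟨1, Finset.mem_univ _, ?_⟩
    · obtain ⟨a, ha⟩ := hfix g g.2
      exact Fintype.card_pos_iff.mpr ⟨⟨a, ha⟩⟩
    · simp only [MulAction.fixedBy, one_smul, Set.ofPred_true, Fintype.card_setUniv]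
      omega
  rw [burnside, hone, one_mul] at this
  simp at this

end PermutationGroup

theorem eq_of_card_support_mul_le_sum {β : Type*} [Fintype β] {f : β → ℕ} {M : ℕ}
    (hf : ∀ b, f b ≤ M) (hsum : Nat.card (Function.support f) * M ≤ ∑ b, f b) {b : β}
    (hb : f b ≠ 0) : f b = M := by
  classical
  set S := Finset.univ.filter (f · ≠ 0)
  have hS : Nat.card (Function.support f) = S.card := by
    rw [← Fintype.card_coe, Nat.card_eq_fintype_card]
    exact Fintype.card_congr (Equiv.subtypeEquivRight fun _ => by simp [S])
  have heq : ∑ b ∈ S, f b = ∑ _b ∈ S, M := by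
    refine le_antisymm (Finset.sum_le_sum fun b _ => hf b) ?_
    rw [Finset.sum_const, smul_eq_mul, ← hS, Finset.sum_filter_ne_zero]
    exact hsum
  exact (Finset.sum_eq_sum_iff_of_le fun b _ => hf b).mp heq b (by simp [S, hb])

abbrev intPow {V : Type*} (G : Subgroup (Perm V)) (n : ℕ) : Subgroup (Perm (Σ _ : Fin n, V)) :=
  intProd fun _ : Fin n => G

namespace intPow

variable {V : Type*} {n : ℕ} {G : Subgroup (Perm V)}

def mk (g : Fin n → Perm V) (hg : ∀ i, g i ∈ G) : intPow G n :=
  ⟨Perm.sigmaCongrRightHom _ g, g, fun i _ => hg i, rfl⟩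

@[simp]
theorem mk_apply (g : Fin n → Perm V) (hg : ∀ i, g i ∈ G) (x : Σ _ : Fin n, V) :
    (mk g hg : Perm (Σ _ : Fin n, V)) x = ⟨x.1, g x.1 x.2⟩ :=
  rfl

theorem exists_eq_mk (k : intPow G n) : ∃ g hg, k = mk g hg := by
  obtain ⟨_, g, hg, rfl⟩ := k
  exact ⟨g, fun i => hg i (Set.mem_univ i), rfl⟩

theorem apply_fst (k : intPow G n) (x : Σ _ : Fin n, V) : ((k : Perm _) x).1 = x.1 := by
  obtain ⟨g, _, rfl⟩ := exists_eq_mk k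
  rfl

theorem apply_eq_iff (k : intPow G n) {x y : Σ _ : Fin n, V} (hxy : x.1 = y.1) :
    (k : Perm _) x = y ↔ ((k : Perm _) x).2 = y.2 :=
  ⟨fun h => by rw [h], fun h => Sigma.ext ((apply_fst k x).trans hxy) (heq_of_eq h)⟩

end intPow

section WreathProduct

variable {V : Type*} {n : ℕ} {G : Subgroup (Perm V)} {H : Subgroup (Perm (Fin n))}

/-- `G ≀ H` is the product set `Gⁿ H`, with `Gⁿ` moved from `Σ _ : Fin n, V` to `V × Fin n`
along `⟨i, a⟩ ↔ (a, i)`. -/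
def wreathOf (k : intPow G n) (η : H) : wreathProd G H :=
  ⟨prodCongr (Equiv.refl V) η *
      ((Equiv.sigmaEquivProd (Fin n) V).trans (Equiv.prodComm _ _)).permCongr k, by
    obtain ⟨g, hg, rfl⟩ := intPow.exists_eq_mk k
    exact ⟨g, η, hg, η.2, Equiv.ext fun _ => rfl⟩⟩

@[simp]
theorem wreathOf_apply (k : intPow G n) (η : H) (a : V) (i : Fin n) :
    (wreathOf k η : Perm (V × Fin n)) (a, i) =
      (((k : Perm (Σ _ : Fin n, V)) ⟨i, a⟩).2, (η : Perm (Fin n)) i) := by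
  obtain ⟨g, hg, rfl⟩ := intPow.exists_eq_mk k
  rfl

theorem wreathOf_injective [Nonempty V] :
    Function.Injective fun x : intPow G n × H => wreathOf x.1 x.2 := by
  rintro ⟨k, η⟩ ⟨k', η'⟩ h
  have happ (a : V) (i : Fin n) := congrArg (fun σ : wreathProd G H => (σ : Perm _) (a, i)) h
  simp only [wreathOf_apply, Prod.mk.injEq] at happ
  refine Prod.ext (Subtype.ext (Equiv.ext fun x => ?_)) ?_
  · exact (intPow.apply_eq_iff k (intPow.apply_fst k' x).symm).mpr (happ x.2 x.1).1
  · exact Subtype.ext (Equiv.ext fun i => (happ (Classical.arbitrary V) i).2)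

theorem wreathOf_surjective : Function.Surjective fun x : intPow G n × H => wreathOf x.1 x.2 := by
  rintro ⟨σ, g, η, hg, hη, rfl⟩
  exact ⟨(intPow.mk g hg, ⟨η, hη⟩), Subtype.ext (Equiv.ext fun _ => rfl)⟩

end WreathProduct

section WreathFiber

variable {V : Type*} {n : ℕ} {G : Subgroup (Perm V)} {H : Subgroup (Perm (Fin n))}
  {I : Set (wreathProd G H)}

def wreathFiber (I : Set (wreathProd G H)) (η : H) : Set (intPow G n) :=
  {k | wreathOf k η ∈ I}

theorem IsIntersecting.isIntersecting_wreathFiber (hI : IsIntersecting (wreathProd G H) I)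
    (η : H) : IsIntersecting (intPow G n) (wreathFiber I η) := by
  intro k hk k' hk'
  obtain ⟨⟨a, i⟩, h⟩ := hI _ hk _ hk'
  simp only [wreathOf_apply, Prod.mk.injEq] at h
  exact ⟨⟨i, a⟩, (intPow.apply_eq_iff k (intPow.apply_fst k' _).symm).mpr h.1⟩

theorem IsIntersecting.isIntersecting_setOf_wreathFiber_nonempty
    (hI : IsIntersecting (wreathProd G H) I) :
    IsIntersecting H {η | (wreathFiber I η).Nonempty} := by
  rintro η ⟨k, hk⟩ η' ⟨k', hk'⟩
  obtain ⟨⟨a, i⟩, h⟩ := hI _ hk _ hk'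
  simp only [wreathOf_apply, Prod.mk.injEq] at h
  exact ⟨i, h.2⟩

theorem card_eq_sum_card_wreathFiber [Finite V] [Nonempty V] [Fintype H]
    (I : Set (wreathProd G H)) : Nat.card I = ∑ η : H, Nat.card (wreathFiber I η) := by
  rw [← Nat.card_sigma]
  refine (Nat.card_eq_of_bijective
    (fun x : (Σ η, wreathFiber I η) => (⟨wreathOf x.2 x.1, x.2.2⟩ : I)) ⟨?_, ?_⟩).symm
  · rintro ⟨η, k, hk⟩ ⟨η', k', hk'⟩ h
    have h' : wreathOf k η = wreathOf k' η' := congrArg Subtype.val h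
    obtain ⟨rfl, rfl⟩ := Prod.ext_iff.mp (wreathOf_injective (a₁ := (k, η)) (a₂ := (k', η')) h')
    rfl
  · rintro ⟨σ, hσ⟩
    obtain ⟨⟨k, η⟩, rfl⟩ := wreathOf_surjective σ
    exact ⟨⟨η, k, hσ⟩, rfl⟩

theorem card_stabSet_mul_card_stabSet_le
    (hImax : ∀ J, IsIntersecting (wreathProd G H) J → Nat.card J ≤ Nat.card I) (v : V)
    (i : Fin n) :
    Nat.card (stabSet (intPow G n) ⟨i, v⟩) * Nat.card (stabSet H i) ≤ Nat.card I := by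
  have : Nonempty V := ⟨v⟩
  set J := (fun x : intPow G n × H => wreathOf x.1 x.2) ''
    (stabSet (intPow G n) ⟨i, v⟩ ×ˢ stabSet H i)
  have hJ : IsIntersecting _ J := (isIntersecting_setOf_apply_eq (v, i) (v, i)).mono <| by
    rintro _ ⟨⟨k, η⟩, ⟨hk, hη⟩, rfl⟩
    exact (wreathOf_apply k η v i).trans (Prod.ext (congrArg Sigma.snd hk) hη)
  calc _ = Nat.card (stabSet (intPow G n) ⟨i, v⟩ ×ˢ stabSet H i) := by
        rw [Nat.card_congr (Equiv.Set.prod _ _), Nat.card_prod]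
    _ = Nat.card J := (Nat.card_image_of_injective wreathOf_injective _).symm
    _ ≤ Nat.card I := hImax J hJ

theorem IsIntersecting.card_wreathFiber_eq [Finite V] (hI : IsIntersecting (wreathProd G H) I)
    (hImax : ∀ J, IsIntersecting (wreathProd G H) J → Nat.card J ≤ Nat.card I)
    (hH : IsTransitive H) (hEKR : HasEKR H) {p : Σ _ : Fin n, V}
    (hK : ∀ J, IsIntersecting (intPow G n) J → Nat.card J ≤ Nat.card (stabSet (intPow G n) p))
    {η : H} (hη : (wreathFiber I η).Nonempty) :
    Nat.card (wreathFiber I η) = Nat.card (stabSet (intPow G n) p) := by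
  classical
  have : Nonempty V := ⟨p.2⟩
  let f : H → ℕ := fun η => Nat.card (wreathFiber I η)
  have hsupp : Nat.card (Function.support f) ≤ Nat.card (stabSet H p.1) :=
    hEKR.card_le_card_stabSet hH (hI.isIntersecting_setOf_wreathFiber_nonempty.mono fun η hη =>
      Set.nonempty_coe_sort.mp (Nat.card_ne_zero.mp hη).1) p.1
  refine eq_of_card_support_mul_le_sum (f := f) (fun η => hK _ (hI.isIntersecting_wreathFiber η)) ?_
    (Nat.card_ne_zero.mpr ⟨hη.to_subtype, inferInstance⟩)
  calc _ ≤ Nat.card (stabSet H p.1) * Nat.card (stabSet (intPow G n) p) :=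
        Nat.mul_le_mul_right _ hsupp
    _ ≤ Nat.card I := by rw [mul_comm]; exact card_stabSet_mul_card_stabSet_le hImax p.2 p.1
    _ = ∑ η, f η := card_eq_sum_card_wreathFiber I

end WreathFiber

section WreathStructure

variable {V : Type*} {n : ℕ} {G : Subgroup (Perm V)} {H : Subgroup (Perm (Fin n))}
  {I : Set (wreathProd G H)} {d : Perm V}

theorem forall_update_mem {ι α : Type*} [DecidableEq ι] {S : Set α} {g : ι → α}
    (hg : ∀ i, g i ∈ S) {j : ι} {x : α} (hx : x ∈ S) : ∀ i, Function.update g j x i ∈ S :=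
  (Function.forall_update_iff g fun _ y => y ∈ S).mpr ⟨hx, fun i _ => hg i⟩

/- Both lemmas below test `I` against a pair of elements whose base tuples differ by the
fixed-point-free `d` in all coordinates but one, so that they can only meet in that one. -/

theorem IsIntersecting.wreathFiber_fst_eq (hI : IsIntersecting (wreathProd G H) I)
    (hdG : d ∈ G) (hd : ∀ a, d a ≠ a) {η η' : H} {p q p' q' : Σ _ : Fin n, V}
    (hF : wreathFiber I η = {k : intPow G n | (k : Perm _) p = q})
    (hF' : wreathFiber I η' = {k : intPow G n | (k : Perm _) p' = q'})
    (hne : (wreathFiber I η).Nonempty) (hne' : (wreathFiber I η').Nonempty) : p.1 = p'.1 := by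
  obtain ⟨k, hk⟩ := hne
  obtain ⟨k', hk'⟩ := hne'
  obtain ⟨g, hg, rfl⟩ := intPow.exists_eq_mk k
  obtain ⟨g', hg', rfl⟩ := intPow.exists_eq_mk k'
  by_contra hpp'
  set ĝ := Function.update g p'.1 (g' p'.1 * d⁻¹)
  have hĝ : ∀ i, ĝ i ∈ G := forall_update_mem hg (G.mul_mem (hg' _) (G.inv_mem hdG))
  have h₁ : intPow.mk ĝ hĝ ∈ wreathFiber I η := by
    rw [hF] at hk ⊢
    simpa [ĝ, Function.update_of_ne hpp'] using hk
  have h₂ : intPow.mk (fun i => ĝ i * d) (fun i => G.mul_mem (hĝ i) hdG) ∈ wreathFiber I η' := by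
    rw [hF'] at hk' ⊢
    simpa [ĝ] using hk'
  obtain ⟨⟨a, i⟩, h⟩ := hI _ h₁ _ h₂
  simp only [wreathOf_apply, intPow.mk_apply, Prod.mk.injEq, Perm.mul_apply] at h
  exact hd a ((ĝ i).injective h.1).symm

theorem IsIntersecting.wreathFiber_cross (hI : IsIntersecting (wreathProd G H) I)
    (hdG : d ∈ G) (hd : ∀ a, d a ≠ a) {η η' : H} {p' q' : Σ _ : Fin n, V}
    (hF' : wreathFiber I η' = {k : intPow G n | (k : Perm _) p' = q'})
    {k k' : intPow G n} (hk : k ∈ wreathFiber I η) (hk' : k' ∈ wreathFiber I η') :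
    (η : Perm (Fin n)) p'.1 = (η' : Perm (Fin n)) p'.1 ∧
      ∃ a, (k : Perm (Σ _ : Fin n, V)) ⟨p'.1, a⟩ = (k' : Perm (Σ _ : Fin n, V)) ⟨p'.1, a⟩ := by
  obtain ⟨g, hg, rfl⟩ := intPow.exists_eq_mk k
  obtain ⟨g', hg', rfl⟩ := intPow.exists_eq_mk k'
  set ĝ' := Function.update (fun i => g i * d) p'.1 (g' p'.1)
  have hĝ' : ∀ i, ĝ' i ∈ G := forall_update_mem (fun i => G.mul_mem (hg i) hdG) (hg' _)
  have h₂ : intPow.mk ĝ' hĝ' ∈ wreathFiber I η' := by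
    rw [hF'] at hk' ⊢
    simpa [ĝ'] using hk'
  obtain ⟨⟨a, i⟩, h⟩ := hI _ hk _ h₂
  simp only [wreathOf_apply, intPow.mk_apply, Prod.mk.injEq] at h
  by_cases hi : i = p'.1
  · subst hi
    refine ⟨h.2, a, ?_⟩
    simpa [ĝ'] using h.1
  · simp only [ĝ', Function.update_of_ne hi, Perm.mul_apply] at h
    exact absurd ((g i).injective h.1).symm (hd a)

theorem IsIntersecting.exists_subset_setOf_apply_eq [Finite V]
    (hI : IsIntersecting (wreathProd G H) I) (hIne : I.Nonempty) (hdG : d ∈ G) (hd : ∀ a, d a ≠ a)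
    (hGn : HasStrictEKR (intPow G n))
    (hmax : ∀ η, (wreathFiber I η).Nonempty →
      ∀ J, IsIntersecting (intPow G n) J → Nat.card J ≤ Nat.card (wreathFiber I η)) :
    ∃ x y, I ⊆ {σ | (σ : Perm (V × Fin n)) x = y} := by
  have hfiber (η : H) (hη : (wreathFiber I η).Nonempty) :
      ∃ p q, wreathFiber I η = {k : intPow G n | (k : Perm (Σ _ : Fin n, V)) p = q} :=
    hGn.eq_setOf_apply_eq (hI.isIntersecting_wreathFiber η) (hmax η hη)
  obtain ⟨σ₀, hσ₀⟩ := hIne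
  obtain ⟨⟨k₀, η₀⟩, rfl⟩ := wreathOf_surjective σ₀
  have hη₀ : (wreathFiber I η₀).Nonempty := ⟨k₀, hσ₀⟩
  obtain ⟨p₀, q₀, hF₀⟩ := hfiber η₀ hη₀
  refine ⟨(p₀.2, p₀.1), (q₀.2, (η₀ : Perm (Fin n)) p₀.1), fun σ hσ => ?_⟩
  obtain ⟨⟨k, η⟩, rfl⟩ := wreathOf_surjective σ
  have hη : (wreathFiber I η).Nonempty := ⟨k, hσ⟩
  obtain ⟨p, q, hF⟩ := hfiber η hη
  have hfst : p₀.1 = p.1 := hI.wreathFiber_fst_eq hdG hd hF₀ hF hη₀ hη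
  have hsub : wreathFiber I η ⊆ wreathFiber I η₀ :=
    (hI.isIntersecting_wreathFiber η₀).subset_of_forall_card_le (hmax η₀ hη₀)
      (hI.isIntersecting_wreathFiber η) fun _ h₀ _ h =>
        let ⟨_, a, ha⟩ := hI.wreathFiber_cross hdG hd hF h₀ h
        ⟨_, ha⟩
  have hk : (k : Perm (Σ _ : Fin n, V)) p₀ = q₀ := by
    have := hsub hσ
    rwa [hF₀] at this
  have hηp₀ : (η : Perm (Fin n)) p₀.1 = (η₀ : Perm (Fin n)) p₀.1 := by
    rw [hfst]
    exact (hI.wreathFiber_cross hdG hd hF hσ₀ hσ).1.symm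
  show (wreathOf k η : Perm (V × Fin n)) (p₀.2, p₀.1) = (q₀.2, (η₀ : Perm (Fin n)) p₀.1)
  rw [wreathOf_apply, hηp₀]
  exact congrArg (·, _) (congrArg Sigma.snd hk)

end WreathStructure

/-- Let `G ≤ Sym(V)` with `|V| ≥ 3` and `H ≤ Sₙ` be transitive. If the
internal direct product `Gⁿ` has the strict-EKR-property and `H` has the EKR-property,
then `G ≀ H` has the strict-EKR-property. -/
theorem wreathProd_hasStrictEKR_of_intProd {V : Type*} [Fintype V]
    (hV : 3 ≤ Fintype.card V) {n : ℕ} (G : Subgroup (Equiv.Perm V))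
    (H : Subgroup (Equiv.Perm (Fin n))) (hG : IsTransitive G) (hH : IsTransitive H)
    (hGn : HasStrictEKR (intProd (fun _ : Fin n => G))) (hEKR : HasEKR H) :
    HasStrictEKR (wreathProd G H) := by
  intro I hI hImax
  obtain ⟨p, hK⟩ := hGn.exists_forall_card_le
  have : Nonempty (V × Fin n) := ⟨(p.2, p.1)⟩
  obtain ⟨d, hdG, hd⟩ := hG.exists_mem_forall_apply_ne (by omega)
  have hmax (η : H) (hη : (wreathFiber I η).Nonempty) (J : Set (intPow G n))
      (hJ : IsIntersecting _ J) : Nat.card J ≤ Nat.card (wreathFiber I η) :=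
    (hI.card_wreathFiber_eq hImax hH hEKR hK hη).symm ▸ hK J hJ
  obtain ⟨x, y, hsub⟩ :=
    hI.exists_subset_setOf_apply_eq (nonempty_of_forall_card_le hImax) hdG hd hGn hmax
  exact ⟨x, exists_eq_image_mul_stabSet_of_subset hImax hsub⟩
end
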